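/- arXiv:2406.06409 — 10 statements merged into one kernel-verified Lean document; each statement's English description precedes it below -/
import Mathlib

section
/- Let Ω ⊆ ℝ^d be open, f: Ω → ℝ continuous, and suppose hypo(f) satisfies a ρ(·)-exterior sphere condition for some continuous ρ > 0, i.e. for every x ∈ Ω there exists a unit proximal normal v_x to hypo(f) at (x,f(x)) realized by a ball of radius ρ(x). Suppose the proximal normal cone to hypo(f) at (x,f(x)) is one-dimensional, i.e. equals {s v_x : s ≥ 0} for some unit vector v_x ∈ ℝ^{d+1}. Then v_x·(y−x, f(y)−f(x)) = o(|y−x| + |f(y)−f(x)|) as y → x in Ω. -/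
set_option maxHeartbeats 1000000

/-- Let `Ω ⊆ ℝ^d` be open, `f : Ω → ℝ` continuous, and suppose
`hypo(f)` satisfies a `ρ(·)`-exterior sphere condition (`ρ` continuous and positive).
If the proximal normal cone to `hypo(f)` at `(x, f x)` is a single ray
`{s • v_x : s ≥ 0}` for a unit vector `v_x = (w₀, c₀) ∈ ℝ^d × ℝ`, then
`v_x · (y - x, f y - f x) = o(|y - x| + |f y - f x|)` as `y → x` in `Ω`. -/
theorem hypo_differentiable_of_ray_normal_cone {d : ℕ}
    (Ω : Set (EuclideanSpace ℝ (Fin d))) (hΩ : IsOpen Ω)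
    (f : EuclideanSpace ℝ (Fin d) → ℝ) (hf : ContinuousOn f Ω)
    (ρ : EuclideanSpace ℝ (Fin d) → ℝ) (hρc : ContinuousOn ρ Ω)
    (hρpos : ∀ y ∈ Ω, 0 < ρ y)
    -- exterior sphere condition for the hypograph
    (hsphere : ∀ y ∈ Ω, ∃ w : EuclideanSpace ℝ (Fin d), ∃ c : ℝ,
      ‖w‖ ^ 2 + c ^ 2 = 1 ∧ ∀ z ∈ Ω, ∀ β : ℝ, β ≤ f z →
        (inner ℝ w (z - y) : ℝ) + c * (β - f y) ≤
          (1 / (2 * ρ y)) * (‖z - y‖ ^ 2 + (β - f y) ^ 2))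
    (x : EuclideanSpace ℝ (Fin d)) (hx : x ∈ Ω)
    (w₀ : EuclideanSpace ℝ (Fin d)) (c₀ : ℝ) (hunit : ‖w₀‖ ^ 2 + c₀ ^ 2 = 1)
    -- the proximal normal cone at `(x, f x)` is the ray generated by `(w₀, c₀)`
    (hray : {p : EuclideanSpace ℝ (Fin d) × ℝ | ∃ σ : ℝ, 0 ≤ σ ∧
        ∀ z ∈ Ω, ∀ β : ℝ, β ≤ f z →
          (inner ℝ p.1 (z - x) : ℝ) + p.2 * (β - f x) ≤
            σ * (‖z - x‖ ^ 2 + (β - f x) ^ 2)} =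
      {p : EuclideanSpace ℝ (Fin d) × ℝ | ∃ s : ℝ, 0 ≤ s ∧ p = (s • w₀, s * c₀)}) :
    ∀ ε > 0, ∃ δ > 0, ∀ y ∈ Ω, ‖y - x‖ < δ →
      |(inner ℝ w₀ (y - x) : ℝ) + c₀ * (f y - f x)| ≤ ε * (‖y - x‖ + |f y - f x|) := by
  have hρx : (0:ℝ) < ρ x := hρpos x hx
  have hfx : ContinuousAt f x := hf.continuousAt (hΩ.mem_nhds hx)
  have hρcx : ContinuousAt ρ x := hρc.continuousAt (hΩ.mem_nhds hx)
  -- From the ray hypothesis: any unit proximal normal at (x, f x) equals (w₀, c₀).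
  have hray_unit : ∀ w : EuclideanSpace ℝ (Fin d), ∀ c : ℝ, ‖w‖ ^ 2 + c ^ 2 = 1 →
      (∃ σ : ℝ, 0 ≤ σ ∧ ∀ z ∈ Ω, ∀ β : ℝ, β ≤ f z →
        (inner ℝ w (z - x) : ℝ) + c * (β - f x) ≤ σ * (‖z - x‖ ^ 2 + (β - f x) ^ 2)) →
      w = w₀ ∧ c = c₀ := by
    intro w c hwc hmem
    have h1 : (w, c) ∈ {p : EuclideanSpace ℝ (Fin d) × ℝ | ∃ σ : ℝ, 0 ≤ σ ∧
        ∀ z ∈ Ω, ∀ β : ℝ, β ≤ f z →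
          (inner ℝ p.1 (z - x) : ℝ) + p.2 * (β - f x) ≤
            σ * (‖z - x‖ ^ 2 + (β - f x) ^ 2)} := hmem
    rw [hray] at h1
    obtain ⟨s, hs, hps⟩ := h1
    have hw : w = s • w₀ := congrArg Prod.fst hps
    have hc : c = s * c₀ := congrArg Prod.snd hps
    have hnw : ‖w‖ = s * ‖w₀‖ := by
      rw [hw, norm_smul, Real.norm_eq_abs, abs_of_nonneg hs]
    have hw2 : ‖w‖ ^ 2 = s ^ 2 * ‖w₀‖ ^ 2 := by rw [hnw]; ring
    have hc2 : c ^ 2 = s ^ 2 * c₀ ^ 2 := by rw [hc]; ring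
    have hs2 : s ^ 2 = 1 := by nlinarith
    have hs1 : s = 1 := by nlinarith
    constructor
    · rw [hw, hs1, one_smul]
    · rw [hc, hs1, one_mul]
  -- The sphere normal at x equals (w₀, c₀).
  obtain ⟨wx, cx, hwcx, hnormx⟩ := hsphere x hx
  have hxq : wx = w₀ ∧ cx = c₀ := by
    refine hray_unit wx cx hwcx ⟨1 / (2 * ρ x), by positivity, hnormx⟩
  have hnorm₀ : ∀ z ∈ Ω, ∀ β : ℝ, β ≤ f z →
      (inner ℝ w₀ (z - x) : ℝ) + c₀ * (β - f x) ≤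
        (1 / (2 * ρ x)) * (‖z - x‖ ^ 2 + (β - f x) ^ 2) := by
    rw [← hxq.1, ← hxq.2]; exact hnormx
  -- Key: normals at nearby points are close to (w₀, c₀).
  have key : ∀ ε : ℝ, 0 < ε → ∃ δ > 0, ∀ y ∈ Ω, ‖y - x‖ < δ →
      ∀ w : EuclideanSpace ℝ (Fin d), ∀ c : ℝ, ‖w‖ ^ 2 + c ^ 2 = 1 →
      (∀ z ∈ Ω, ∀ β : ℝ, β ≤ f z →
        (inner ℝ w (z - y) : ℝ) + c * (β - f y) ≤
          (1 / (2 * ρ y)) * (‖z - y‖ ^ 2 + (β - f y) ^ 2)) →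
      ‖w - w₀‖ + |c - c₀| ≤ ε := by
    by_contra hcon
    push_neg at hcon
    obtain ⟨ε, εpos, H⟩ := hcon
    choose y hyΩ hyδ w c huc hnm hfar using fun n : ℕ =>
      H (1 / (n + 1 : ℝ)) (by positivity)
    -- compactness: extract convergent subsequence of (w n, c n)
    have hmem : ∀ n, (w n, c n) ∈ Metric.closedBall (0 : EuclideanSpace ℝ (Fin d) × ℝ) 1 := by
      intro n
      rw [Metric.mem_closedBall, dist_zero_right, Prod.norm_def]
      have h1 : ‖w n‖ ≤ 1 := by nlinarith [huc n, norm_nonneg (w n), sq_nonneg (c n)]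
      have h2 : ‖c n‖ ≤ 1 := by
        rw [Real.norm_eq_abs]
        nlinarith [huc n, abs_nonneg (c n), sq_abs (c n), sq_nonneg (‖w n‖)]
      exact max_le h1 h2
    obtain ⟨p, -, φ, hφ, hp⟩ :=
      (isCompact_closedBall (0 : EuclideanSpace ℝ (Fin d) × ℝ) 1).tendsto_subseq hmem
    have hwp : Filter.Tendsto (fun n => w (φ n)) Filter.atTop (nhds p.1) :=
      ((continuous_fst.tendsto p).comp hp)
    have hcp : Filter.Tendsto (fun n => c (φ n)) Filter.atTop (nhds p.2) :=
      ((continuous_snd.tendsto p).comp hp)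
    have hyx : Filter.Tendsto (fun n => y (φ n)) Filter.atTop (nhds x) := by
      rw [tendsto_iff_norm_sub_tendsto_zero]
      refine squeeze_zero (f := fun n : ℕ => ‖y (φ n) - x‖)
        (g := fun n : ℕ => 1 / (n + 1 : ℝ)) (fun n => norm_nonneg _) ?_
        tendsto_one_div_add_atTop_nhds_zero_nat
      intro n
      refine le_trans (le_of_lt (hyδ (φ n))) ?_
      apply one_div_le_one_div_of_le (by positivity)
      have : n ≤ φ n := hφ.le_apply
      push_cast
      linarith [(Nat.cast_le (α := ℝ)).2 this]
    have hfy : Filter.Tendsto (fun n => f (y (φ n))) Filter.atTop (nhds (f x)) :=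
      hfx.tendsto.comp hyx
    have hρy : Filter.Tendsto (fun n => ρ (y (φ n))) Filter.atTop (nhds (ρ x)) :=
      hρcx.tendsto.comp hyx
    -- p is a unit vector
    have hpu : ‖p.1‖ ^ 2 + p.2 ^ 2 = 1 := by
      have hl : Filter.Tendsto (fun n => ‖w (φ n)‖ ^ 2 + c (φ n) ^ 2)
          Filter.atTop (nhds (‖p.1‖ ^ 2 + p.2 ^ 2)) :=
        ((hwp.norm.pow 2).add (hcp.pow 2))
      have hr : Filter.Tendsto (fun n => ‖w (φ n)‖ ^ 2 + c (φ n) ^ 2)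
          Filter.atTop (nhds 1) := by
        simp only [huc]; exact tendsto_const_nhds
      exact tendsto_nhds_unique hl hr
    -- p is a proximal normal at (x, f x)
    have hpn : ∀ z ∈ Ω, ∀ β : ℝ, β ≤ f z →
        (inner ℝ p.1 (z - x) : ℝ) + p.2 * (β - f x) ≤
          (1 / (2 * ρ x)) * (‖z - x‖ ^ 2 + (β - f x) ^ 2) := by
      intro z hz β hβ
      have h1 : Filter.Tendsto
          (fun n => (inner ℝ (w (φ n)) (z - y (φ n)) : ℝ) + c (φ n) * (β - f (y (φ n))))
          Filter.atTop (nhds ((inner ℝ p.1 (z - x) : ℝ) + p.2 * (β - f x))) :=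
        (hwp.inner (tendsto_const_nhds.sub hyx)).add
          (hcp.mul (tendsto_const_nhds.sub hfy))
      have h2 : Filter.Tendsto
          (fun n => (1 / (2 * ρ (y (φ n)))) * (‖z - y (φ n)‖ ^ 2 + (β - f (y (φ n))) ^ 2))
          Filter.atTop
          (nhds ((1 / (2 * ρ x)) * (‖z - x‖ ^ 2 + (β - f x) ^ 2))) := by
        refine Filter.Tendsto.mul ?_ ?_
        · exact tendsto_const_nhds.div (tendsto_const_nhds.mul hρy)
            (by positivity)
        · exact ((tendsto_const_nhds.sub hyx).norm.pow 2).add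
            ((tendsto_const_nhds.sub hfy).pow 2)
      exact le_of_tendsto_of_tendsto' h1 h2 (fun n => hnm (φ n) z hz β hβ)
    have hpeq : p.1 = w₀ ∧ p.2 = c₀ :=
      hray_unit p.1 p.2 hpu ⟨1 / (2 * ρ x), by positivity, hpn⟩
    -- contradiction with hfar
    have hdist : Filter.Tendsto (fun n => ‖w (φ n) - w₀‖ + |c (φ n) - c₀|)
        Filter.atTop (nhds (‖p.1 - w₀‖ + |p.2 - c₀|)) :=
      ((hwp.sub tendsto_const_nhds).norm).add ((hcp.sub tendsto_const_nhds).abs)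
    have : ε ≤ ‖p.1 - w₀‖ + |p.2 - c₀| :=
      le_of_tendsto_of_tendsto' (tendsto_const_nhds) hdist
        (fun n => le_of_lt (hfar (φ n)))
    rw [hpeq.1, hpeq.2] at this
    simp at this
    linarith
  -- Now the main estimate.
  intro ε εpos
  obtain ⟨δ₁, hδ₁pos, hδ₁⟩ := key (ε / 4) (by linarith)
  -- continuity of ρ : δ₂ with ρ y > ρ x / 2
  have hρ2 : ∀ᶠ y' in nhds x, ρ x / 2 < ρ y' :=
    hρcx.eventually (eventually_gt_nhds (by linarith))
  obtain ⟨δ₂, hδ₂pos, hδ₂⟩ := Metric.eventually_nhds_iff_ball.1 hρ2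
  -- continuity of f : δ₃ with |f y - f x| < ε * ρ x / 8
  have hf2 : ∀ᶠ y' in nhds x, |f y' - f x| < ε * ρ x / 8 := by
    have : Filter.Tendsto (fun y' => |f y' - f x|) (nhds x) (nhds 0) := by
      have h' : Filter.Tendsto (fun y' => f y' - f x) (nhds x) (nhds (f x - f x)) :=
        hfx.tendsto.sub tendsto_const_nhds
      simpa using h'.abs
    exact this.eventually (eventually_lt_nhds (by positivity))
  obtain ⟨δ₃, hδ₃pos, hδ₃⟩ := Metric.eventually_nhds_iff_ball.1 hf2
  refine ⟨min δ₁ (min δ₂ (min δ₃ (ε * ρ x / 8))), by positivity, ?_⟩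
  intro y hy hylt
  have hy1 : ‖y - x‖ < δ₁ := lt_of_lt_of_le hylt (min_le_left _ _)
  have hy2 : ‖y - x‖ < δ₂ :=
    lt_of_lt_of_le hylt (le_trans (min_le_right _ _) (min_le_left _ _))
  have hy3 : ‖y - x‖ < δ₃ := lt_of_lt_of_le hylt
    (le_trans (min_le_right _ _) (le_trans (min_le_right _ _) (min_le_left _ _)))
  have hy4 : ‖y - x‖ < ε * ρ x / 8 := lt_of_lt_of_le hylt
    (le_trans (min_le_right _ _) (le_trans (min_le_right _ _) (min_le_right _ _)))
  have hyball : y ∈ Metric.ball x δ₂ := by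
    rw [Metric.mem_ball, dist_eq_norm]; exact hy2
  have hρy : ρ x / 2 < ρ y := hδ₂ y hyball
  have hyball3 : y ∈ Metric.ball x δ₃ := by
    rw [Metric.mem_ball, dist_eq_norm]; exact hy3
  have hΔ : |f y - f x| < ε * ρ x / 8 := hδ₃ y hyball3
  set Δ : ℝ := f y - f x with hΔdef
  set D : ℝ := ‖y - x‖ + |Δ| with hDdef
  have hD0 : 0 ≤ D := add_nonneg (norm_nonneg _) (abs_nonneg _)
  have hDsmall : D < ε * ρ x / 4 := by
    rw [hDdef]; linarith
  have hsq : ‖y - x‖ ^ 2 + Δ ^ 2 ≤ D ^ 2 := by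
    rw [hDdef]
    nlinarith [norm_nonneg (y - x), abs_nonneg Δ, sq_abs Δ]
  -- Upper bound from hnorm₀
  have hup : (inner ℝ w₀ (y - x) : ℝ) + c₀ * Δ ≤ ε * D := by
    have h1 := hnorm₀ y hy (f y) le_rfl
    have h2 : (1 / (2 * ρ x)) * (‖y - x‖ ^ 2 + Δ ^ 2) ≤ (1 / (2 * ρ x)) * D ^ 2 := by
      apply mul_le_mul_of_nonneg_left hsq (by positivity)
    have h2ρ : (0:ℝ) < 2 * ρ x := by linarith
    have h3 : (1 / (2 * ρ x)) * D ^ 2 ≤ ε * D := by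
      rw [div_mul_eq_mul_div, div_le_iff₀ h2ρ]
      nlinarith [hD0, hDsmall, hρx, εpos]
    calc (inner ℝ w₀ (y - x) : ℝ) + c₀ * Δ ≤ (1 / (2 * ρ x)) * (‖y - x‖ ^ 2 + Δ ^ 2) := h1
      _ ≤ ε * D := le_trans h2 h3
  -- Lower bound using the normal at y
  obtain ⟨wy, cy, hucy, hnmy⟩ := hsphere y hy
  have hclose : ‖wy - w₀‖ + |cy - c₀| ≤ ε / 4 := hδ₁ y hy hy1 wy cy hucy hnmy
  have hlow : -(ε * D) ≤ (inner ℝ w₀ (y - x) : ℝ) + c₀ * Δ := by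
    have h1 := hnmy x hx (f x) (le_refl (f x))
    -- (inner ℝ wy (x - y)) + cy * (f x - f y) ≤ (1/(2 ρ y)) * (‖x - y‖² + (f x - f y)²)
    have hnormsym : ‖x - y‖ = ‖y - x‖ := norm_sub_rev x y
    have hρypos : 0 < ρ y := hρpos y hy
    have h2 : (1 / (2 * ρ y)) * (‖x - y‖ ^ 2 + (f x - f y) ^ 2) ≤ (ε / 4) * D := by
      have e1 : ‖x - y‖ ^ 2 + (f x - f y) ^ 2 = ‖y - x‖ ^ 2 + Δ ^ 2 := by
        rw [hnormsym, hΔdef]; ring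
      rw [e1]
      have h2' : (1 / (2 * ρ y)) * (‖y - x‖ ^ 2 + Δ ^ 2) ≤ (1 / (2 * ρ y)) * D ^ 2 :=
        mul_le_mul_of_nonneg_left hsq (by positivity)
      have h2ρy : (0:ℝ) < 2 * ρ y := by linarith
      have h3 : (1 / (2 * ρ y)) * D ^ 2 ≤ (ε / 4) * D := by
        rw [div_mul_eq_mul_div, div_le_iff₀ h2ρy]
        have hDρ : D * D ≤ (ε * ρ x / 4) * D := by nlinarith [hD0, hDsmall]
        nlinarith [hD0, hDsmall, hρx, hρy, εpos]
      linarith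
    -- so inner wy (y - x) + cy * Δ ≥ -(ε/4) D
    have h4 : -((ε / 4) * D) ≤ (inner ℝ wy (y - x) : ℝ) + cy * Δ := by
      have e2 : (inner ℝ wy (x - y) : ℝ) = -(inner ℝ wy (y - x) : ℝ) := by
        rw [← inner_neg_right]; congr 1; abel
      have e3 : cy * (f x - f y) = -(cy * Δ) := by rw [hΔdef]; ring
      rw [e2, e3] at h1
      linarith
    -- replace wy, cy by w₀, c₀
    have h5 : |(inner ℝ (w₀ - wy) (y - x) : ℝ)| ≤ ‖w₀ - wy‖ * ‖y - x‖ :=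
      abs_real_inner_le_norm _ _
    have h6 : (inner ℝ w₀ (y - x) : ℝ) = (inner ℝ wy (y - x) : ℝ) + (inner ℝ (w₀ - wy) (y - x) : ℝ) := by
      rw [inner_sub_left]; ring
    have h7 : ‖w₀ - wy‖ ≤ ε / 4 := by
      rw [norm_sub_rev]; linarith [abs_nonneg (cy - c₀)]
    have h8 : |c₀ - cy| ≤ ε / 4 := by
      rw [abs_sub_comm]; linarith [norm_nonneg (wy - w₀)]
    have h9 : |(c₀ - cy) * Δ| ≤ (ε / 4) * |Δ| := by
      rw [abs_mul]
      exact mul_le_mul_of_nonneg_right h8 (abs_nonneg _)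
    have h10 : c₀ * Δ = cy * Δ + (c₀ - cy) * Δ := by ring
    have h11 : |(inner ℝ (w₀ - wy) (y - x) : ℝ)| ≤ (ε / 4) * ‖y - x‖ :=
      le_trans h5 (mul_le_mul_of_nonneg_right h7 (norm_nonneg _))
    have h12 : -((ε / 4) * ‖y - x‖) ≤ (inner ℝ (w₀ - wy) (y - x) : ℝ) :=
      neg_le_of_abs_le h11
    have h13 : -((ε / 4) * |Δ|) ≤ (c₀ - cy) * Δ := neg_le_of_abs_le h9
    rw [h6, h10]
    have : -((ε/4) * D) - (ε/4) * ‖y - x‖ - (ε/4) * |Δ| ≤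
        ((inner ℝ wy (y - x) : ℝ) + (inner ℝ (w₀ - wy) (y - x) : ℝ)) + (cy * Δ + (c₀ - cy) * Δ) := by
      linarith
    refine le_trans ?_ this
    rw [hDdef]
    nlinarith
  rw [abs_le]
  constructor <;> [exact hlow; exact hup]
end

section
/- Let Ω ⊆ ℝ^d be open and f: Ω → ℝ continuous with hypo(f) satisfying a ρ(·)-exterior sphere condition. If x_n ∈ Ω is a sequence of differentiability points of f converging to x ∈ Ω with Df(x_n) → ξ ∈ ℝ^d, then (−ξ, 1) is a proximal normal to hypo(f) at (x, f(x)), realized by a ball of radius ρ(x). -/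
/-- Let `Ω ⊆ ℝ^d` be open and `f : Ω → ℝ` continuous with `hypo(f)`
satisfying a `ρ(·)`-exterior sphere condition (in particular, at each differentiability
point `y` the unit vector `(-∇f(y), 1)/|(-∇f(y), 1)|` is a proximal normal realized by a
ball of radius `ρ(y)`).  If `x_n ∈ Ω` are differentiability points of `f` converging to
`x ∈ Ω` with `∇f(x_n) → ξ`, then `(-ξ, 1)` is a proximal normal to `hypo(f)` at
`(x, f x)` realized by a ball of radius `ρ(x)`. -/
theorem limit_gradient_proximal_normal {d : ℕ}
    (Ω : Set (EuclideanSpace ℝ (Fin d))) (hΩ : IsOpen Ω)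
    (f : EuclideanSpace ℝ (Fin d) → ℝ) (hf : ContinuousOn f Ω)
    (ρ : EuclideanSpace ℝ (Fin d) → ℝ) (hρc : ContinuousOn ρ Ω)
    (hρpos : ∀ y ∈ Ω, 0 < ρ y)
    (hsphere : ∀ y ∈ Ω, ∃ w : EuclideanSpace ℝ (Fin d), ∃ c : ℝ,
      ‖w‖ ^ 2 + c ^ 2 = 1 ∧ ∀ z ∈ Ω, ∀ β : ℝ, β ≤ f z →
        (inner ℝ w (z - y) : ℝ) + c * (β - f y) ≤
          (1 / (2 * ρ y)) * (‖z - y‖ ^ 2 + (β - f y) ^ 2))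
    (hgradsphere : ∀ y ∈ Ω, DifferentiableAt ℝ f y →
      ∀ z ∈ Ω, ∀ β : ℝ, β ≤ f z →
        (inner ℝ (-(gradient f y)) (z - y) : ℝ) + (β - f y) ≤
          (Real.sqrt (‖gradient f y‖ ^ 2 + 1) / (2 * ρ y)) *
            (‖z - y‖ ^ 2 + (β - f y) ^ 2))
    (x : EuclideanSpace ℝ (Fin d)) (hx : x ∈ Ω)
    (xseq : ℕ → EuclideanSpace ℝ (Fin d))
    (hseqΩ : ∀ n, xseq n ∈ Ω) (hdiff : ∀ n, DifferentiableAt ℝ f (xseq n))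
    (hconv : Filter.Tendsto xseq Filter.atTop (nhds x))
    (ξ : EuclideanSpace ℝ (Fin d))
    (hgrad : Filter.Tendsto (fun n => gradient f (xseq n)) Filter.atTop (nhds ξ)) :
    ∀ z ∈ Ω, ∀ β : ℝ, β ≤ f z →
      (inner ℝ (-ξ) (z - x) : ℝ) + (β - f x) ≤
        (Real.sqrt (‖ξ‖ ^ 2 + 1) / (2 * ρ x)) * (‖z - x‖ ^ 2 + (β - f x) ^ 2) := by
  intro z hz β hβ
  have hmem := hΩ.mem_nhds hx
  have hfc : Filter.Tendsto (fun n => f (xseq n)) Filter.atTop (nhds (f x)) :=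
    (hf.continuousAt hmem).tendsto.comp hconv
  have hρt : Filter.Tendsto (fun n => ρ (xseq n)) Filter.atTop (nhds (ρ x)) :=
    (hρc.continuousAt hmem).tendsto.comp hconv
  have key : ∀ n, (inner ℝ (-(gradient f (xseq n))) (z - xseq n) : ℝ) + (β - f (xseq n)) ≤
      (Real.sqrt (‖gradient f (xseq n)‖ ^ 2 + 1) / (2 * ρ (xseq n))) *
        (‖z - xseq n‖ ^ 2 + (β - f (xseq n)) ^ 2) := fun n =>
    hgradsphere (xseq n) (hseqΩ n) (hdiff n) z hz β hβ
  have hL : Filter.Tendsto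
      (fun n => (inner ℝ (-(gradient f (xseq n))) (z - xseq n) : ℝ) + (β - f (xseq n)))
      Filter.atTop (nhds ((inner ℝ (-ξ) (z - x) : ℝ) + (β - f x))) :=
    (hgrad.neg.inner (tendsto_const_nhds.sub hconv)).add (tendsto_const_nhds.sub hfc)
  have hR : Filter.Tendsto
      (fun n => (Real.sqrt (‖gradient f (xseq n)‖ ^ 2 + 1) / (2 * ρ (xseq n))) *
        (‖z - xseq n‖ ^ 2 + (β - f (xseq n)) ^ 2))
      Filter.atTop
      (nhds ((Real.sqrt (‖ξ‖ ^ 2 + 1) / (2 * ρ x)) * (‖z - x‖ ^ 2 + (β - f x) ^ 2))) := by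
    have h1 : Filter.Tendsto (fun n => Real.sqrt (‖gradient f (xseq n)‖ ^ 2 + 1))
        Filter.atTop (nhds (Real.sqrt (‖ξ‖ ^ 2 + 1))) :=
      ((hgrad.norm.pow 2).add tendsto_const_nhds).sqrt
    have h2 : Filter.Tendsto (fun n => 2 * ρ (xseq n)) Filter.atTop (nhds (2 * ρ x)) :=
      tendsto_const_nhds.mul hρt
    have h3 : (2 : ℝ) * ρ x ≠ 0 := by have := hρpos x hx; positivity
    exact (h1.div h2 h3).mul
      (((tendsto_const_nhds.sub hconv).norm.pow 2).add ((tendsto_const_nhds.sub hfc).pow 2))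
  exact le_of_tendsto_of_tendsto' hL hR key
end

section
/- Let Ω ⊆ ℝ^d be open and f: Ω → ℝ continuous with hypo(f) satisfying a ρ(·)-exterior sphere condition. If x_n ∈ Ω are differentiability points of f converging to x ∈ Ω with |Df(x_n)| → +∞ and Df(x_n)/|Df(x_n)| → ξ, then (−ξ, 0) is a proximal normal to hypo(f) at (x, f(x)) realized by a ball of radius ρ(x); in particular ξ is a nonzero proximal horizontal supergradient of f at x. -/
/-- Let `Ω ⊆ ℝ^d` be open and `f : Ω → ℝ` continuous with `hypo(f)`
satisfying a `ρ(·)`-exterior sphere condition (at each differentiability point `y` the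
unit vector `(-∇f(y), 1)/|(-∇f(y), 1)|` is a proximal normal realized by a ball of radius
`ρ(y)`).  If `x_n ∈ Ω` are differentiability points converging to `x ∈ Ω` with
`|∇f(x_n)| → ∞` and `∇f(x_n)/|∇f(x_n)| → ξ`, then `(-ξ, 0)` is a proximal normal to
`hypo(f)` at `(x, f x)` realized by a ball of radius `ρ(x)`; in particular `ξ` is a
nonzero proximal horizontal supergradient of `f` at `x`. -/
theorem limit_blowup_gradient_horizontal_normal {d : ℕ}
    (Ω : Set (EuclideanSpace ℝ (Fin d))) (hΩ : IsOpen Ω)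
    (f : EuclideanSpace ℝ (Fin d) → ℝ) (hf : ContinuousOn f Ω)
    (ρ : EuclideanSpace ℝ (Fin d) → ℝ) (hρc : ContinuousOn ρ Ω)
    (hρpos : ∀ y ∈ Ω, 0 < ρ y)
    (hsphere : ∀ y ∈ Ω, ∃ w : EuclideanSpace ℝ (Fin d), ∃ c : ℝ,
      ‖w‖ ^ 2 + c ^ 2 = 1 ∧ ∀ z ∈ Ω, ∀ β : ℝ, β ≤ f z →
        (inner ℝ w (z - y) : ℝ) + c * (β - f y) ≤
          (1 / (2 * ρ y)) * (‖z - y‖ ^ 2 + (β - f y) ^ 2))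
    (hgradsphere : ∀ y ∈ Ω, DifferentiableAt ℝ f y →
      ∀ z ∈ Ω, ∀ β : ℝ, β ≤ f z →
        (inner ℝ (-(gradient f y)) (z - y) : ℝ) + (β - f y) ≤
          (Real.sqrt (‖gradient f y‖ ^ 2 + 1) / (2 * ρ y)) *
            (‖z - y‖ ^ 2 + (β - f y) ^ 2))
    (x : EuclideanSpace ℝ (Fin d)) (hx : x ∈ Ω)
    (xseq : ℕ → EuclideanSpace ℝ (Fin d))
    (hseqΩ : ∀ n, xseq n ∈ Ω) (hdiff : ∀ n, DifferentiableAt ℝ f (xseq n))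
    (hconv : Filter.Tendsto xseq Filter.atTop (nhds x))
    (ξ : EuclideanSpace ℝ (Fin d))
    (hblow : Filter.Tendsto (fun n => ‖gradient f (xseq n)‖) Filter.atTop Filter.atTop)
    (hdir : Filter.Tendsto (fun n => ‖gradient f (xseq n)‖⁻¹ • gradient f (xseq n))
      Filter.atTop (nhds ξ)) :
    ξ ≠ 0 ∧ ∀ z ∈ Ω, ∀ β : ℝ, β ≤ f z →
      (inner ℝ (-ξ) (z - x) : ℝ) ≤ (‖ξ‖ / (2 * ρ x)) * (‖z - x‖ ^ 2 + (β - f x) ^ 2) := by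

  have hev : ∀ᶠ n in Filter.atTop, 1 ≤ ‖gradient f (xseq n)‖ :=
    hblow.eventually (Filter.eventually_ge_atTop 1)
  have hinv : Filter.Tendsto (fun n => ‖gradient f (xseq n)‖⁻¹) Filter.atTop (nhds 0) :=
    hblow.inv_tendsto_atTop
  have hfconv : Filter.Tendsto (fun n => f (xseq n)) Filter.atTop (nhds (f x)) :=
    ((hf.continuousAt (hΩ.mem_nhds hx)).tendsto).comp hconv
  have hρconv : Filter.Tendsto (fun n => ρ (xseq n)) Filter.atTop (nhds (ρ x)) :=
    ((hρc.continuousAt (hΩ.mem_nhds hx)).tendsto).comp hconv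
  have hξnorm : ‖ξ‖ = 1 := by
    have h1 : Filter.Tendsto (fun n => ‖‖gradient f (xseq n)‖⁻¹ • gradient f (xseq n)‖)
        Filter.atTop (nhds ‖ξ‖) := hdir.norm
    have h2 : (fun n => ‖‖gradient f (xseq n)‖⁻¹ • gradient f (xseq n)‖)
        =ᶠ[Filter.atTop] (fun _ => (1 : ℝ)) := by
      filter_upwards [hev] with n hn
      have hpos : 0 < ‖gradient f (xseq n)‖ := lt_of_lt_of_le one_pos hn
      rw [norm_smul, norm_inv, norm_norm, inv_mul_cancel₀ hpos.ne']
    exact tendsto_nhds_unique (Filter.Tendsto.congr' h2 h1) tendsto_const_nhds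
  refine ⟨by simpa [hξnorm] using fun h => by simp [h] at hξnorm, ?_⟩
  intro z hz β hβ
  set A : ℕ → ℝ := fun n =>
    (inner ℝ (-(‖gradient f (xseq n)‖⁻¹ • gradient f (xseq n))) (z - xseq n) : ℝ) +
      ‖gradient f (xseq n)‖⁻¹ * (β - f (xseq n)) with hA
  set B : ℕ → ℝ := fun n =>
    (Real.sqrt (1 + (‖gradient f (xseq n)‖⁻¹) ^ 2) / (2 * ρ (xseq n))) *
      (‖z - xseq n‖ ^ 2 + (β - f (xseq n)) ^ 2) with hB
  have hAB : A ≤ᶠ[Filter.atTop] B := by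
    filter_upwards [hev] with n hn
    have hpos : 0 < ‖gradient f (xseq n)‖ := lt_of_lt_of_le one_pos hn
    have key := hgradsphere (xseq n) (hseqΩ n) (hdiff n) z hz β hβ
    have hmul := mul_le_mul_of_nonneg_left key (inv_nonneg.mpr (norm_nonneg (gradient f (xseq n))))
    have hsqrt : Real.sqrt (‖gradient f (xseq n)‖ ^ 2 + 1) * ‖gradient f (xseq n)‖⁻¹ =
        Real.sqrt (1 + (‖gradient f (xseq n)‖⁻¹) ^ 2) := by
      rw [show ‖gradient f (xseq n)‖⁻¹ = Real.sqrt ((‖gradient f (xseq n)‖⁻¹) ^ 2) from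
        (Real.sqrt_sq (inv_nonneg.mpr (norm_nonneg _))).symm, ← Real.sqrt_mul (by positivity)]
      congr 1
      rw [Real.sq_sqrt (by positivity), add_mul, one_mul, inv_pow, mul_inv_cancel₀ (pow_pos hpos 2).ne']
    calc A n = ‖gradient f (xseq n)‖⁻¹ *
          ((inner ℝ (-(gradient f (xseq n))) (z - xseq n) : ℝ) + (β - f (xseq n))) := by
          simp only [hA, ← smul_neg, real_inner_smul_left]
          ring
      _ ≤ ‖gradient f (xseq n)‖⁻¹ *
          ((Real.sqrt (‖gradient f (xseq n)‖ ^ 2 + 1) / (2 * ρ (xseq n))) *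
            (‖z - xseq n‖ ^ 2 + (β - f (xseq n)) ^ 2)) := hmul
      _ = B n := by rw [hB]; dsimp only; rw [← hsqrt]; ring
  have hAlim : Filter.Tendsto A Filter.atTop (nhds ((inner ℝ (-ξ) (z - x) : ℝ) + 0)) := by
    refine Filter.Tendsto.add ?_ ?_
    · exact (hdir.neg).inner (tendsto_const_nhds.sub hconv)
    · simpa using hinv.mul (tendsto_const_nhds.sub hfconv)
  have hBlim : Filter.Tendsto B Filter.atTop
      (nhds ((Real.sqrt (1 + (0:ℝ) ^ 2) / (2 * ρ x)) * (‖z - x‖ ^ 2 + (β - f x) ^ 2))) := by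
    have hρx : (2 : ℝ) * ρ x ≠ 0 := by
      have := hρpos x hx; positivity
    refine Filter.Tendsto.mul (Filter.Tendsto.div ?_ (tendsto_const_nhds.mul hρconv) hρx) ?_
    · exact (Real.continuous_sqrt.tendsto _).comp (tendsto_const_nhds.add (hinv.pow 2))
    · exact (((tendsto_const_nhds.sub hconv).norm.pow 2).add
        ((tendsto_const_nhds.sub hfconv).pow 2))
  have hfin := le_of_tendsto_of_tendsto hAlim hBlim hAB
  simpa [hξnorm] using hfin
end

section
/- Let Ω ⊆ ℝ^d be open, f: Ω → ℝ continuous, and suppose hypo(f) satisfies a ρ(·)-exterior sphere condition. Fix x ∈ Ω and suppose the proximal normal cone N^P_{hypo(f)}(x,f(x)) contains both a nonzero vector (−ξ, 0) (with ξ a unit vector) and some vector of the form (−ξ₁, λ₁) with λ₁ ∈ {0,1} whose normalization is different from (−ξ,0). Assume there is a unit direction ζ ∈ ℝ^d with ζ·ξ > 0 and ζ·ξ₁ < 0, and a sequence of differentiability points y_n → x of f with |y_n − (x + ζ/n)| ≤ n^{−2}. If (−ξ₁,λ₁) is a Fréchet normal to hypo(f) at (x,f(x)), then f(y_n) < f(x)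 for all sufficiently large n. -/
set_option maxHeartbeats 1000000 in
/-- Let `Ω` be open, `f` continuous on `Ω`, and `hypo(f)` satisfy a
`ρ(·)`-exterior sphere condition.  Suppose the proximal normal cone to `hypo(f)` at
`(x, f x)` contains `(-ξ, 0)` with `ξ` a unit vector, `(-ξ₁, λ₁)` (`λ₁ ∈ {0,1}`,
nonzero, with normalization different from `(-ξ, 0)`) is a Fréchet normal to `hypo(f)`
at `(x, f x)`, `ζ` is a unit direction with `⟪ζ, ξ⟫ > 0` and `⟪ζ, ξ₁⟫ < 0`, and `y_n`
are differentiability points of `f` with `|y_n - (x + ζ/n)| ≤ n⁻²`.  Then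
`f(y_n) < f(x)` for all sufficiently large `n`. -/
theorem eventually_lt_of_frechet_normal {d : ℕ}
    (Ω : Set (EuclideanSpace ℝ (Fin d))) (hΩ : IsOpen Ω)
    (f : EuclideanSpace ℝ (Fin d) → ℝ) (hf : ContinuousOn f Ω)
    (ρ : EuclideanSpace ℝ (Fin d) → ℝ) (hρc : ContinuousOn ρ Ω)
    (hρpos : ∀ y ∈ Ω, 0 < ρ y)
    (hsphere : ∀ y ∈ Ω, ∃ w : EuclideanSpace ℝ (Fin d), ∃ c : ℝ,
      ‖w‖ ^ 2 + c ^ 2 = 1 ∧ ∀ z ∈ Ω, ∀ β : ℝ, β ≤ f z →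
        (inner ℝ w (z - y) : ℝ) + c * (β - f y) ≤
          (1 / (2 * ρ y)) * (‖z - y‖ ^ 2 + (β - f y) ^ 2))
    (x : EuclideanSpace ℝ (Fin d)) (hx : x ∈ Ω)
    (ξ ξ₁ ζ : EuclideanSpace ℝ (Fin d)) (lam₁ : ℝ)
    (hξunit : ‖ξ‖ = 1)
    -- `(-ξ, 0)` is a proximal normal to `hypo(f)` at `(x, f x)`
    (hξprox : ∃ σ : ℝ, 0 ≤ σ ∧ ∀ z ∈ Ω, ∀ β : ℝ, β ≤ f z →
      (inner ℝ (-ξ) (z - x) : ℝ) ≤ σ * (‖z - x‖ ^ 2 + (β - f x) ^ 2))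
    (hlam₁ : lam₁ = 0 ∨ lam₁ = 1)
    (hnz : ¬(ξ₁ = 0 ∧ lam₁ = 0))
    -- the normalization of `(-ξ₁, λ₁)` differs from `(-ξ, 0)`
    (hdiff : ¬ ∃ s : ℝ, 0 < s ∧ ξ₁ = s • ξ ∧ lam₁ = 0)
    (hζunit : ‖ζ‖ = 1) (hζξ : 0 < (inner ℝ ζ ξ : ℝ)) (hζξ₁ : (inner ℝ ζ ξ₁ : ℝ) < 0)
    (y : ℕ → EuclideanSpace ℝ (Fin d))
    (hyΩ : ∀ n, y n ∈ Ω) (hydiff : ∀ n, DifferentiableAt ℝ f (y n))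
    (hyapprox : ∀ n : ℕ, 1 ≤ n → ‖y n - (x + (n:ℝ)⁻¹ • ζ)‖ ≤ ((n:ℝ) ^ 2)⁻¹)
    -- `(-ξ₁, λ₁)` is a Fréchet normal to `hypo(f)` at `(x, f x)`
    (hfrechet : ∀ ε > (0:ℝ), ∃ δ > (0:ℝ), ∀ z ∈ Ω, ∀ β : ℝ, β ≤ f z →
      Real.sqrt (‖z - x‖ ^ 2 + (β - f x) ^ 2) < δ →
        (inner ℝ (-ξ₁) (z - x) : ℝ) + lam₁ * (β - f x) ≤
          ε * Real.sqrt (‖z - x‖ ^ 2 + (β - f x) ^ 2)) :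
    ∃ N₀ : ℕ, ∀ n ≥ N₀, f (y n) < f x := by
  set c : ℝ := -(inner ℝ ζ ξ₁ : ℝ) with hc
  have hcpos : 0 < c := by simp only [hc]; linarith
  obtain ⟨δ, hδ, H⟩ := hfrechet (c / 2) (by linarith)
  obtain ⟨N₁, hN₁⟩ := exists_nat_gt (2 / δ)
  obtain ⟨N₂, hN₂⟩ := exists_nat_gt ((2 * ‖ξ₁‖ + c) / c)
  refine ⟨max N₁ N₂ + 1, fun n hn => ?_⟩
  have hn1 : 1 ≤ n := le_trans (Nat.le_add_left 1 _) hn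
  have hr1 : (1:ℝ) ≤ (n:ℝ) := by exact_mod_cast hn1
  have hnpos : (0:ℝ) < (n:ℝ) := by linarith
  set a : ℝ := ((n:ℝ))⁻¹ with ha
  have hapos : 0 < a := by positivity
  have hale1 : a ≤ 1 := by
    rw [ha, inv_le_one_iff₀]; right; exact hr1
  have har : a * (n:ℝ) = 1 := inv_mul_cancel₀ (ne_of_gt hnpos)
  by_contra hge
  push_neg at hge
  have happ : ‖y n - (x + a • ζ)‖ ≤ a ^ 2 := by
    have := hyapprox n hn1
    rwa [← inv_pow] at this
  have hdecomp : y n - x = a • ζ + (y n - (x + a • ζ)) := by abel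
  have hnormv : ‖y n - x‖ ≤ a + a ^ 2 := by
    rw [hdecomp]
    refine le_trans (norm_add_le _ _) ?_
    have hz : ‖a • ζ‖ = a := by
      rw [norm_smul, hζunit, mul_one, Real.norm_eq_abs, abs_of_pos hapos]
    rw [hz]; linarith
  have hsq : Real.sqrt (‖y n - x‖ ^ 2 + (f x - f x) ^ 2) = ‖y n - x‖ := by
    simp [Real.sqrt_sq_eq_abs]
  have hNn₁ : (N₁ : ℝ) ≤ (n:ℝ) := by
    exact_mod_cast le_trans (le_max_left N₁ N₂) (Nat.le_of_succ_le hn)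
  have hNn₂ : (N₂ : ℝ) ≤ (n:ℝ) := by
    exact_mod_cast le_trans (le_max_right N₁ N₂) (Nat.le_of_succ_le hn)
  have h2n : 2 / δ < (n:ℝ) := lt_of_lt_of_le hN₁ hNn₁
  have h2a : 2 * a < δ := by
    have h2 : 2 < (n:ℝ) * δ := by
      rw [div_lt_iff₀ hδ] at h2n; linarith
    calc 2 * a = 2 * a := rfl
      _ < ((n:ℝ) * δ) * a := by
          exact mul_lt_mul_of_pos_right h2 hapos
      _ = δ * (a * (n:ℝ)) := by ring
      _ = δ := by rw [har, mul_one]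
  have hδn : Real.sqrt (‖y n - x‖ ^ 2 + (f x - f x) ^ 2) < δ := by
    rw [hsq]
    nlinarith [sq_nonneg a]
  have key := H (y n) (hyΩ n) (f x) hge hδn
  rw [hsq] at key
  have hinζ : (inner ℝ (-ξ₁) ζ : ℝ) = c := by
    rw [inner_neg_left, real_inner_comm, hc]
  have hinner : (inner ℝ (-ξ₁) (y n - x) : ℝ)
      = a * c + (inner ℝ (-ξ₁) (y n - (x + a • ζ)) : ℝ) := by
    rw [hdecomp, inner_add_right, real_inner_smul_right, hinζ]
  have hbd : -(‖ξ₁‖ * a ^ 2) ≤ (inner ℝ (-ξ₁) (y n - (x + a • ζ)) : ℝ) := by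
    have h1 := abs_real_inner_le_norm (-ξ₁) (y n - (x + a • ζ))
    rw [norm_neg] at h1
    have h2 : ‖ξ₁‖ * ‖y n - (x + a • ζ)‖ ≤ ‖ξ₁‖ * a ^ 2 :=
      mul_le_mul_of_nonneg_left happ (norm_nonneg _)
    have h3 := neg_abs_le ((inner ℝ (-ξ₁) (y n - (x + a • ζ)) : ℝ))
    linarith
  have hrc : 2 * ‖ξ₁‖ + c < (n:ℝ) * c := by
    have := lt_of_lt_of_le hN₂ hNn₂
    rw [div_lt_iff₀ hcpos] at this; linarith
  -- combine everything
  have key2 : a * c - ‖ξ₁‖ * a ^ 2 ≤ (c / 2) * (a + a ^ 2) := by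
    have hle : (c / 2) * ‖y n - x‖ ≤ (c / 2) * (a + a ^ 2) :=
      mul_le_mul_of_nonneg_left hnormv (by linarith)
    rw [hinner] at key
    nlinarith
  have hfin : (2 * ‖ξ₁‖ + c) * a ^ 2 < ((n:ℝ) * c) * a ^ 2 :=
    mul_lt_mul_of_pos_right hrc (by positivity)
  have hna : ((n:ℝ) * c) * a ^ 2 = c * a := by
    have h : (n:ℝ) * a = 1 := by linarith [har]
    linear_combination (c * a) * h
  nlinarith [key2, hfin, hna]
end

section
/- Let Ω ⊆ ℝ^d be open and f: Ω → ℝ upper semicontinuous. If f is locally semiconcave at x (i.e. there exist δ, c > 0 such that z ↦ f(z) − c|z|² is concave on B(x,δ)), then the proximal normal cone to hypo(f) at (x, f(x)) is pointed: N^P_{hypo(f)}(x,f(x)) ∩ (−N^P_{hypo(f)}(x,f(x))) = {0}. -/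
lemma aux_nonpos {a C t₀ : ℝ} (ht₀ : 0 < t₀) (hC : 0 ≤ C)
    (h : ∀ t : ℝ, 0 < t → t ≤ t₀ → a ≤ C * t) : a ≤ 0 := by
  by_contra h'
  push_neg at h'
  have hCpos : (0:ℝ) < 2 * (C + 1) := by linarith
  set t : ℝ := min t₀ (a / (2 * (C + 1))) with ht
  have htpos : 0 < t := lt_min ht₀ (by positivity)
  have hle : t ≤ a / (2 * (C + 1)) := min_le_right _ _
  have hkey := h t htpos (min_le_left _ _)
  have h2 : C * t ≤ C * (a / (2 * (C + 1))) := mul_le_mul_of_nonneg_left hle hC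
  have h3 : a = (2 * (C + 1)) * (a / (2 * (C + 1))) := by field_simp
  nlinarith [htpos, hle]

set_option maxHeartbeats 1000000 in
/-- If `f : Ω → ℝ` is upper semicontinuous on an open set `Ω ⊆ ℝ^d`
and locally semiconcave at `x` (i.e. `z ↦ f z - c‖z‖²` is concave on `B(x, δ)` for some
`δ, c > 0`), then the proximal normal cone to `hypo(f)` at `(x, f x)` is pointed. -/
theorem pointed_of_semiconcave {d : ℕ}
    (Ω : Set (EuclideanSpace ℝ (Fin d))) (hΩ : IsOpen Ω)
    (f : EuclideanSpace ℝ (Fin d) → ℝ) (hf : UpperSemicontinuousOn f Ω)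
    (x : EuclideanSpace ℝ (Fin d)) (hx : x ∈ Ω)
    (δ c : ℝ) (hδ : 0 < δ) (hc : 0 < c) (hball : Metric.ball x δ ⊆ Ω)
    (hconc : ConcaveOn ℝ (Metric.ball x δ) (fun z => f z - c * ‖z‖ ^ 2)) :
    ∀ (w : EuclideanSpace ℝ (Fin d)) (a : ℝ),
      (∃ σ : ℝ, 0 ≤ σ ∧ ∀ z ∈ Ω, ∀ β : ℝ, β ≤ f z →
        (inner ℝ w (z - x) : ℝ) + a * (β - f x) ≤ σ * (‖z - x‖ ^ 2 + (β - f x) ^ 2)) →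
      (∃ σ : ℝ, 0 ≤ σ ∧ ∀ z ∈ Ω, ∀ β : ℝ, β ≤ f z →
        (inner ℝ (-w) (z - x) : ℝ) + (-a) * (β - f x) ≤ σ * (‖z - x‖ ^ 2 + (β - f x) ^ 2)) →
      w = 0 ∧ a = 0 := by
  rintro w a ⟨σ1, hσ1, h1⟩ ⟨σ2, hσ2, h2⟩
  -- Step 1: a = 0
  have hinner0 : (inner ℝ w (x - x) : ℝ) = 0 := by simp
  have hinner0' : (inner ℝ (-w) (x - x) : ℝ) = 0 := by simp
  have hnn0 : ‖x - x‖ = 0 := by simp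
  have ha_ge : -a ≤ 0 := by
    refine aux_nonpos one_pos hσ1 (fun t ht _ => ?_)
    have h := h1 x hx (f x - t) (by linarith)
    rw [hinner0, hnn0] at h
    have h' : (-a) * t ≤ (σ1 * t) * t := by nlinarith
    exact le_of_mul_le_mul_right h' ht
  have ha_le : a ≤ 0 := by
    refine aux_nonpos one_pos hσ2 (fun t ht _ => ?_)
    have h := h2 x hx (f x - t) (by linarith)
    rw [hinner0', hnn0] at h
    have h' : a * t ≤ (σ2 * t) * t := by nlinarith
    exact le_of_mul_le_mul_right h' ht
  have ha : a = 0 := le_antisymm ha_le (by linarith)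
  -- Step 2: w = 0
  set g : EuclideanSpace ℝ (Fin d) → ℝ := fun z => f z - c * ‖z‖ ^ 2 with hg
  set r : ℝ := δ / (2 * (‖w‖ + 1)) with hr
  have hwn : (0:ℝ) ≤ ‖w‖ := norm_nonneg w
  have hrpos : 0 < r := by positivity
  set y : EuclideanSpace ℝ (Fin d) := x + r • w with hy
  have hrw : r * ‖w‖ < δ := by
    rw [hr]
    rw [div_mul_eq_mul_div, div_lt_iff₀ (by positivity)]
    nlinarith
  have hyball : y ∈ Metric.ball x δ := by
    rw [Metric.mem_ball, dist_eq_norm, hy, add_sub_cancel_left, norm_smul,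
      Real.norm_eq_abs, abs_of_pos hrpos]
    exact hrw
  set K : ℝ := (g y - g x) / r + 2 * c * (inner ℝ x w : ℝ) with hK
  set M : ℝ := |K| + c * ‖w‖ ^ 2 with hM
  have hMnn : 0 ≤ M := by positivity
  have key : ∀ t : ℝ, 0 < t → t ≤ min r 1 →
      ‖w‖ ^ 2 ≤ (σ1 * (‖w‖ ^ 2 + M ^ 2)) * t := by
    intro t ht htle
    have htr : t ≤ r := le_trans htle (min_le_left _ _)
    have ht1 : t ≤ 1 := le_trans htle (min_le_right _ _)
    set z : EuclideanSpace ℝ (Fin d) := x + t • w with hz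
    have hzball : z ∈ Metric.ball x δ := by
      rw [Metric.mem_ball, dist_eq_norm, hz, add_sub_cancel_left, norm_smul,
        Real.norm_eq_abs, abs_of_pos ht]
      calc t * ‖w‖ ≤ r * ‖w‖ := by nlinarith
        _ < δ := hrw
    have hzΩ : z ∈ Ω := hball hzball
    have hs0 : (0:ℝ) ≤ 1 - t / r := by
      rw [sub_nonneg]
      exact (div_le_one hrpos).mpr htr
    have hs1 : (0:ℝ) ≤ t / r := by positivity
    have hsum : (1 - t / r) + t / r = 1 := by ring
    have hcomb := hconc.2 (Metric.mem_ball_self hδ) hyball hs0 hs1 hsum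
    have hpt : (1 - t / r) • x + (t / r) • y = z := by
      rw [hy, hz]
      have h1 : (1 - t / r) • x + (t / r) • (x + r • w)
          = x + ((t / r) * r) • w := by module
      rw [h1, div_mul_cancel₀ t hrpos.ne']
    rw [hpt] at hcomb
    simp only [smul_eq_mul] at hcomb
    -- hcomb : (1 - t/r) * g x + (t/r) * g y ≤ g z
    set β : ℝ := (1 - t / r) * g x + (t / r) * g y + c * ‖z‖ ^ 2 with hβ
    have hβle : β ≤ f z := by
      have hgz : g z = f z - c * ‖z‖ ^ 2 := rfl
      rw [hβ]; linarith [hcomb]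
    have hnormz : ‖z‖ ^ 2 = ‖x‖ ^ 2 + 2 * (t * (inner ℝ x w : ℝ)) + t ^ 2 * ‖w‖ ^ 2 := by
      have h := norm_add_sq_real x (t • w)
      rw [real_inner_smul_right, norm_smul, Real.norm_eq_abs] at h
      rw [hz, h, mul_pow, sq_abs]
    have hfx : f x = g x + c * ‖x‖ ^ 2 := by simp [hg]
    have hβx : β - f x = t * K + t ^ 2 * (c * ‖w‖ ^ 2) := by
      rw [hβ, hfx, hnormz, hK]
      field_simp
      ring
    have habs : |β - f x| ≤ t * M := by
      rw [hβx, hM]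
      calc |t * K + t ^ 2 * (c * ‖w‖ ^ 2)|
          ≤ |t * K| + |t ^ 2 * (c * ‖w‖ ^ 2)| := abs_add_le _ _
        _ = t * |K| + t ^ 2 * (c * ‖w‖ ^ 2) := by
            rw [abs_mul, abs_of_pos ht, abs_of_nonneg (by positivity : (0:ℝ) ≤ t ^ 2 * (c * ‖w‖ ^ 2))]
        _ ≤ t * |K| + t * (c * ‖w‖ ^ 2) := by
            nlinarith [mul_nonneg (mul_nonneg (sub_nonneg.mpr ht1) ht.le)
              (by positivity : (0:ℝ) ≤ c * ‖w‖ ^ 2)]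
        _ = t * (|K| + c * ‖w‖ ^ 2) := by ring
    have hzx : z - x = t • w := by rw [hz, add_sub_cancel_left]
    have hiw : (inner ℝ w (z - x) : ℝ) = t * ‖w‖ ^ 2 := by
      rw [hzx, real_inner_smul_right, real_inner_self_eq_norm_sq]
    have hzn : ‖z - x‖ ^ 2 = t ^ 2 * ‖w‖ ^ 2 := by
      rw [hzx, norm_smul, Real.norm_eq_abs, mul_pow, sq_abs]
    have hsq : (β - f x) ^ 2 ≤ t ^ 2 * M ^ 2 := by
      calc (β - f x) ^ 2 = |β - f x| ^ 2 := (sq_abs _).symm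
        _ ≤ (t * M) ^ 2 := pow_le_pow_left₀ (abs_nonneg _) habs 2
        _ = t ^ 2 * M ^ 2 := by ring
    have main := h1 z hzΩ β hβle
    rw [hiw, ha, hzn] at main
    have h' : ‖w‖ ^ 2 * t ≤ ((σ1 * (‖w‖ ^ 2 + M ^ 2)) * t) * t := by nlinarith
    exact le_of_mul_le_mul_right h' ht
  have hw2 : ‖w‖ ^ 2 ≤ 0 :=
    aux_nonpos (lt_min hrpos one_pos)
      (mul_nonneg hσ1 (by positivity)) key
  have hw : w = 0 := by
    have : ‖w‖ = 0 := by nlinarith [norm_nonneg w]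
    exact norm_eq_zero.mp this
  exact ⟨hw, ha⟩
end

section
/- Let Ω ⊆ ℝ^d be open and f: Ω → ℝ continuous such that hypo(f) satisfies a ρ(·)-exterior sphere condition, and suppose the set of differentiability points of f is dense in Ω (in fact f is differentiable a.e.). Fix x ∈ Ω and suppose there is a unit vector ξ ∈ ℝ^d with (−ξ, 0) ∈ N^P_{hypo(f)}(x,f(x)) and (ξ, 0) ∈ N^P_{hypo(f)}(x,f(x)) (the cone is not pointed). Then for every sequence of differentiability points x_n of f with |x_n − (x + v*/n − ξ/n^{3/2})| ≤ n^{−2} for some fixed vector v*, one has f(x) − f(x_n) ≥ C n^{−3/4} for some constant C > 0 and all n large; in particular |Df(x_n)| → ∞ along a subsequence realizing these points. -/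
open Filter Real

private lemma sqrt_sq_add_one_le (g : ℝ) (hg : 0 ≤ g) :
    Real.sqrt (g ^ 2 + 1) ≤ g + 1 := by
  have h : g ^ 2 + 1 ≤ (g + 1) ^ 2 := by nlinarith
  calc Real.sqrt (g ^ 2 + 1) ≤ Real.sqrt ((g + 1) ^ 2) := Real.sqrt_le_sqrt h
    _ = g + 1 := Real.sqrt_sq (by linarith)

private lemma eventually_le_rpow' (a r : ℝ) (hr : 0 < r) :
    ∀ᶠ n : ℕ in atTop, a ≤ (n : ℝ) ^ r :=
  ((tendsto_rpow_atTop hr).comp tendsto_natCast_atTop_atTop).eventually_ge_atTop a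

private lemma sq_le_sq_imp (m t : ℝ) (hm : 0 ≤ m) (h : t ^ 2 ≤ m ^ 2) :
    t ≤ m := by
  nlinarith [sq_nonneg (m - t), sq_nonneg (m + t)]

set_option maxHeartbeats 1000000 in
/-- Let `Ω` be open, `f : Ω → ℝ` continuous with `hypo(f)` satisfying a
`ρ(·)`-exterior sphere condition (at each differentiability point the normalized gradient
normal is realized by a ball of radius `ρ`).  Suppose the proximal normal cone at
`(x, f x)` is not pointed: both `(-ξ, 0)` and `(ξ, 0)` are proximal normals, with `ξ` a
unit vector.  Then for every sequence of differentiability points `x_n` with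
`|x_n - (x + v*/n - ξ/n^{3/2})| ≤ n⁻²`, one has `f(x) - f(x_n) ≥ C n^{-3/4}` for some
`C > 0` and all `n` large; in particular `|∇f(x_n)| → ∞`. -/
theorem nonpointed_forces_blowup {d : ℕ}
    (Ω : Set (EuclideanSpace ℝ (Fin d))) (hΩ : IsOpen Ω)
    (f : EuclideanSpace ℝ (Fin d) → ℝ) (hf : ContinuousOn f Ω)
    (ρ : EuclideanSpace ℝ (Fin d) → ℝ) (hρc : ContinuousOn ρ Ω)
    (hρpos : ∀ y ∈ Ω, 0 < ρ y)
    (hsphere : ∀ y ∈ Ω, ∃ w : EuclideanSpace ℝ (Fin d), ∃ c : ℝ,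
      ‖w‖ ^ 2 + c ^ 2 = 1 ∧ ∀ z ∈ Ω, ∀ β : ℝ, β ≤ f z →
        (inner ℝ w (z - y) : ℝ) + c * (β - f y) ≤
          (1 / (2 * ρ y)) * (‖z - y‖ ^ 2 + (β - f y) ^ 2))
    (hgradsphere : ∀ y ∈ Ω, DifferentiableAt ℝ f y →
      ∀ z ∈ Ω, ∀ β : ℝ, β ≤ f z →
        (inner ℝ (-(gradient f y)) (z - y) : ℝ) + (β - f y) ≤
          (Real.sqrt (‖gradient f y‖ ^ 2 + 1) / (2 * ρ y)) *
            (‖z - y‖ ^ 2 + (β - f y) ^ 2))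
    (x : EuclideanSpace ℝ (Fin d)) (hx : x ∈ Ω)
    (ξ : EuclideanSpace ℝ (Fin d)) (hξunit : ‖ξ‖ = 1) (σ : ℝ) (hσ : 0 ≤ σ)
    -- non-pointedness: `(-ξ, 0)` and `(ξ, 0)` are both proximal normals at `(x, f x)`
    (hnonpointed : ∀ z ∈ Ω, ∀ β : ℝ, β ≤ f z →
      |(inner ℝ ξ (z - x) : ℝ)| ≤ σ * (‖z - x‖ ^ 2 + (β - f x) ^ 2))
    (vstar : EuclideanSpace ℝ (Fin d))
    (xseq : ℕ → EuclideanSpace ℝ (Fin d))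
    (hseqΩ : ∀ n, xseq n ∈ Ω) (hdiff : ∀ n, DifferentiableAt ℝ f (xseq n))
    (happrox : ∀ n : ℕ, 1 ≤ n →
      ‖xseq n - (x + (n:ℝ)⁻¹ • vstar - ((n:ℝ) ^ ((3:ℝ)/2))⁻¹ • ξ)‖ ≤ ((n:ℝ) ^ 2)⁻¹) :
    (∃ C > (0:ℝ), ∃ N₀ : ℕ, ∀ n ≥ N₀, C / (n:ℝ) ^ ((3:ℝ)/4) ≤ f x - f (xseq n)) ∧
    Filter.Tendsto (fun n => ‖gradient f (xseq n)‖) Filter.atTop Filter.atTop := by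
  classical
  -- ## Step A: σ > 0
  have hσpos : 0 < σ := by
    rcases hσ.lt_or_eq with h | h
    · exact h
    · exfalso
      obtain ⟨ε, hε, hball⟩ := Metric.isOpen_iff.mp hΩ x hx
      set z := x + (ε/2) • ξ with hz
      have hzx : z - x = (ε/2) • ξ := by rw [hz]; abel
      have hzΩ : z ∈ Ω := by
        apply hball
        rw [Metric.mem_ball, dist_eq_norm, hzx, norm_smul, hξunit]
        rw [Real.norm_eq_abs, abs_of_nonneg (by linarith : (0:ℝ) ≤ ε/2)]
        linarith
      have hkey := hnonpointed z hzΩ (f z) le_rfl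
      rw [← h, zero_mul, hzx, real_inner_smul_right, real_inner_self_eq_norm_sq,
        hξunit] at hkey
      have habs : |ε/2 * 1^2| = ε/2 := by
        rw [abs_of_nonneg (by norm_num; linarith)]; ring
      rw [habs] at hkey
      linarith
  have hsqrtσ : 0 < Real.sqrt σ := Real.sqrt_pos.mpr hσpos
  set C : ℝ := 1 / (2 * Real.sqrt σ) with hCdef
  have hCpos : 0 < C := by positivity
  set c : ℝ := ‖vstar‖ + 2 with hcdef
  have hcpos : 0 < c := by positivity
  -- ## Step B: distance bound
  have hdist : ∀ n : ℕ, 1 ≤ n → ‖xseq n - x‖ ≤ c / n := by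
    intro n hn
    have h1n : (1:ℝ) ≤ (n:ℝ) := by exact_mod_cast hn
    have hn0 : (0:ℝ) < (n:ℝ) := by linarith
    have hP0 : (0:ℝ) < (n:ℝ) ^ ((3:ℝ)/2) := Real.rpow_pos_of_pos hn0 _
    have hPn : (n:ℝ) ≤ (n:ℝ) ^ ((3:ℝ)/2) := by
      calc (n:ℝ) = (n:ℝ) ^ (1:ℝ) := (Real.rpow_one _).symm
        _ ≤ _ := Real.rpow_le_rpow_of_exponent_le h1n (by norm_num)
    have hsplit : xseq n - x =
        (xseq n - (x + (n:ℝ)⁻¹ • vstar - ((n:ℝ) ^ ((3:ℝ)/2))⁻¹ • ξ))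
        + ((n:ℝ)⁻¹ • vstar - ((n:ℝ) ^ ((3:ℝ)/2))⁻¹ • ξ) := by abel
    rw [hsplit]
    have h2 : ‖(n:ℝ)⁻¹ • vstar‖ = (n:ℝ)⁻¹ * ‖vstar‖ := by
      rw [norm_smul, Real.norm_eq_abs, abs_of_pos (inv_pos.mpr hn0)]
    have h3 : ‖((n:ℝ) ^ ((3:ℝ)/2))⁻¹ • ξ‖ = ((n:ℝ) ^ ((3:ℝ)/2))⁻¹ := by
      rw [norm_smul, Real.norm_eq_abs, abs_of_pos (inv_pos.mpr hP0), hξunit, mul_one]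
    have hA : ((n:ℝ)^2)⁻¹ ≤ (n:ℝ)⁻¹ := by
      apply inv_anti₀ hn0; nlinarith
    have hB : ((n:ℝ) ^ ((3:ℝ)/2))⁻¹ ≤ (n:ℝ)⁻¹ := inv_anti₀ hn0 hPn
    calc ‖_ + ((n:ℝ)⁻¹ • vstar - ((n:ℝ) ^ ((3:ℝ)/2))⁻¹ • ξ)‖
        ≤ ‖xseq n - (x + (n:ℝ)⁻¹ • vstar - ((n:ℝ) ^ ((3:ℝ)/2))⁻¹ • ξ)‖
          + ‖(n:ℝ)⁻¹ • vstar - ((n:ℝ) ^ ((3:ℝ)/2))⁻¹ • ξ‖ := norm_add_le _ _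
      _ ≤ ((n:ℝ)^2)⁻¹ + (‖(n:ℝ)⁻¹ • vstar‖ + ‖((n:ℝ) ^ ((3:ℝ)/2))⁻¹ • ξ‖) := by
          gcongr
          · exact happrox n hn
          · exact norm_sub_le _ _
      _ ≤ (n:ℝ)⁻¹ + ((n:ℝ)⁻¹ * ‖vstar‖ + (n:ℝ)⁻¹) := by
          rw [h2, h3]; gcongr
      _ = c / n := by rw [hcdef]; field_simp; ring
  -- ## Step C: inner product decomposition
  set a : ℝ := (inner ℝ ξ vstar : ℝ) with hadef
  have hinner : ∀ n : ℕ, 1 ≤ n →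
      |(inner ℝ ξ (xseq n - x) : ℝ) - (a / n - ((n:ℝ) ^ ((3:ℝ)/2))⁻¹)|
        ≤ ((n:ℝ)^2)⁻¹ := by
    intro n hn
    have hsplit : xseq n - x =
        (xseq n - (x + (n:ℝ)⁻¹ • vstar - ((n:ℝ) ^ ((3:ℝ)/2))⁻¹ • ξ))
        + ((n:ℝ)⁻¹ • vstar - ((n:ℝ) ^ ((3:ℝ)/2))⁻¹ • ξ) := by abel
    have h1 : (inner ℝ ξ (xseq n - x) : ℝ) - (a / n - ((n:ℝ) ^ ((3:ℝ)/2))⁻¹)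
        = inner ℝ ξ (xseq n - (x + (n:ℝ)⁻¹ • vstar - ((n:ℝ) ^ ((3:ℝ)/2))⁻¹ • ξ)) := by
      rw [hsplit]
      simp only [inner_add_right, inner_sub_right, real_inner_smul_right,
        real_inner_self_eq_norm_sq, hξunit, hadef]
      ring
    rw [h1]
    calc |(inner ℝ ξ (xseq n - (x + (n:ℝ)⁻¹ • vstar - ((n:ℝ) ^ ((3:ℝ)/2))⁻¹ • ξ)) : ℝ)|
        ≤ ‖ξ‖ * ‖xseq n - (x + (n:ℝ)⁻¹ • vstar - ((n:ℝ) ^ ((3:ℝ)/2))⁻¹ • ξ)‖ :=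
          abs_real_inner_le_norm _ _
      _ ≤ ((n:ℝ)^2)⁻¹ := by rw [hξunit, one_mul]; exact happrox n hn
  -- ## Step C': lower bound on |⟪ξ, xseq n - x⟫|
  have hL : ∀ᶠ n : ℕ in atTop,
      (1/2) * ((n:ℝ) ^ ((3:ℝ)/2))⁻¹ ≤ |(inner ℝ ξ (xseq n - x) : ℝ)| := by
    have habs : ∀ n : ℕ, 1 ≤ n →
        |a / n - ((n:ℝ) ^ ((3:ℝ)/2))⁻¹| - ((n:ℝ)^2)⁻¹
          ≤ |(inner ℝ ξ (xseq n - x) : ℝ)| := by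
      intro n hn
      have h := hinner n hn
      have h2 := abs_sub_abs_le_abs_sub (a / n - ((n:ℝ) ^ ((3:ℝ)/2))⁻¹)
        (inner ℝ ξ (xseq n - x) : ℝ)
      have h3 := abs_sub_comm (a / n - ((n:ℝ) ^ ((3:ℝ)/2))⁻¹)
        (inner ℝ ξ (xseq n - x) : ℝ)
      linarith
    rcases eq_or_ne a 0 with ha0 | ha0
    · filter_upwards [eventually_le_rpow' 2 (1/2) (by norm_num),
        eventually_ge_atTop 1] with n hs hn
      have h1n : (1:ℝ) ≤ (n:ℝ) := by exact_mod_cast hn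
      have hn0 : (0:ℝ) < (n:ℝ) := by linarith
      have hP0 : (0:ℝ) < (n:ℝ) ^ ((3:ℝ)/2) := Real.rpow_pos_of_pos hn0 _
      have hid : (n:ℝ)^((1:ℝ)/2) * (n:ℝ)^((3:ℝ)/2) = (n:ℝ)^2 := by
        rw [← Real.rpow_add hn0, ← Real.rpow_natCast (n:ℝ) 2]; norm_num
      have hT : |a / n - ((n:ℝ) ^ ((3:ℝ)/2))⁻¹| = ((n:ℝ) ^ ((3:ℝ)/2))⁻¹ := by
        rw [ha0, zero_div, zero_sub, abs_neg, abs_of_pos (inv_pos.mpr hP0)]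
      have hkey : ((n:ℝ)^2)⁻¹ ≤ (1/2) * ((n:ℝ) ^ ((3:ℝ)/2))⁻¹ := by
        have h2P : 2 * (n:ℝ) ^ ((3:ℝ)/2) ≤ (n:ℝ)^2 := by
          nlinarith [mul_le_mul_of_nonneg_right hs hP0.le]
        have h3 := inv_anti₀ (by positivity : (0:ℝ) < 2 * (n:ℝ) ^ ((3:ℝ)/2)) h2P
        rw [mul_inv] at h3
        linarith
      have h4 := habs n hn
      rw [hT] at h4
      linarith
    · have haabs : 0 < |a| := abs_pos.mpr ha0
      filter_upwards [eventually_le_rpow' (3/|a|) (1/2) (by norm_num),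
        eventually_ge_atTop 1] with n hs hn
      have h1n : (1:ℝ) ≤ (n:ℝ) := by exact_mod_cast hn
      have hn0 : (0:ℝ) < (n:ℝ) := by linarith
      have hs0 : (0:ℝ) < (n:ℝ)^((1:ℝ)/2) := Real.rpow_pos_of_pos hn0 _
      have hP0 : (0:ℝ) < (n:ℝ) ^ ((3:ℝ)/2) := Real.rpow_pos_of_pos hn0 _
      have hid : (n:ℝ)^((1:ℝ)/2) * (n:ℝ) = (n:ℝ)^((3:ℝ)/2) := by
        nth_rewrite 2 [← Real.rpow_one (n:ℝ)]
        rw [← Real.rpow_add hn0]; norm_num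
      have h3a : 3 ≤ (n:ℝ)^((1:ℝ)/2) * |a| := by
        rw [div_le_iff₀ haabs] at hs; linarith
      have h3P : 3 * ((n:ℝ) ^ ((3:ℝ)/2))⁻¹ ≤ |a| / n := by
        rw [show 3 * ((n:ℝ)^((3:ℝ)/2))⁻¹ = 3 / ((n:ℝ)^((3:ℝ)/2)) by ring,
          div_le_div_iff₀ hP0 hn0]
        have hh1 := mul_le_mul_of_nonneg_right h3a hn0.le
        have hh2 : |a| * ((n:ℝ)^((3:ℝ)/2)) = |a| * ((n:ℝ)^((1:ℝ)/2) * n) := by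
          rw [hid]
        linarith [hh1, hh2.ge, hh2.le]
      have hP2 : ((n:ℝ)^2)⁻¹ ≤ ((n:ℝ) ^ ((3:ℝ)/2))⁻¹ := by
        apply inv_anti₀ hP0
        calc (n:ℝ)^((3:ℝ)/2) ≤ (n:ℝ)^(2:ℝ) :=
              Real.rpow_le_rpow_of_exponent_le h1n (by norm_num)
          _ = (n:ℝ)^2 := by rw [← Real.rpow_natCast (n:ℝ) 2]; norm_num
      have hTlow : |a| / n - ((n:ℝ) ^ ((3:ℝ)/2))⁻¹
          ≤ |a / n - ((n:ℝ) ^ ((3:ℝ)/2))⁻¹| := by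
        have h5 := abs_sub_abs_le_abs_sub (a / n) (((n:ℝ) ^ ((3:ℝ)/2))⁻¹)
        rw [abs_div, abs_of_pos hn0, abs_of_pos (inv_pos.mpr hP0)] at h5
        exact h5
      have h4 := habs n hn
      have hPinv0 : (0:ℝ) ≤ ((n:ℝ) ^ ((3:ℝ)/2))⁻¹ := (inv_pos.mpr hP0).le
      linarith
  -- ## Step D: the quantitative drop of f
  have hDelta : ∀ᶠ n : ℕ in atTop, C / (n:ℝ) ^ ((3:ℝ)/4) ≤ f x - f (xseq n) := by
    filter_upwards [hL, eventually_le_rpow' (4*σ*c^2) (1/2) (by norm_num),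
      eventually_ge_atTop 1] with n hLn hsig hn
    have h1n : (1:ℝ) ≤ (n:ℝ) := by exact_mod_cast hn
    have hn0 : (0:ℝ) < (n:ℝ) := by linarith
    have hP0 : (0:ℝ) < (n:ℝ) ^ ((3:ℝ)/2) := Real.rpow_pos_of_pos hn0 _
    have hQ0 : (0:ℝ) < (n:ℝ) ^ ((3:ℝ)/4) := Real.rpow_pos_of_pos hn0 _
    have hid : (n:ℝ)^((1:ℝ)/2) * (n:ℝ)^((3:ℝ)/2) = (n:ℝ)^2 := by
      rw [← Real.rpow_add hn0, ← Real.rpow_natCast (n:ℝ) 2]; norm_num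
    have hidQ : ((n:ℝ)^((3:ℝ)/4))^2 = (n:ℝ)^((3:ℝ)/2) := by
      rw [← Real.rpow_natCast ((n:ℝ)^((3:ℝ)/4)) 2, ← Real.rpow_mul hn0.le]; norm_num
    set β : ℝ := min (f x) (f (xseq n)) with hβdef
    have hβ : β ≤ f (xseq n) := min_le_right _ _
    have hnp := hnonpointed (xseq n) (hseqΩ n) β hβ
    set m : ℝ := max 0 (f x - f (xseq n)) with hmdef
    have hm0 : 0 ≤ m := le_max_left _ _
    have hβm : β - f x = -m := by
      rcases le_total (f x) (f (xseq n)) with h | h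
      · rw [hβdef, min_eq_left h, hmdef, max_eq_left (by linarith)]; ring
      · rw [hβdef, min_eq_right h, hmdef, max_eq_right (by linarith)]; ring
    rw [hβm] at hnp
    -- ‖xseq n - x‖^2 ≤ c^2/n^2
    have hd2 : ‖xseq n - x‖^2 ≤ c^2 / (n:ℝ)^2 := by
      rw [(div_pow c (n:ℝ) 2).symm]
      exact pow_le_pow_left₀ (norm_nonneg _) (hdist n hn) 2
    -- σ c^2/n^2 ≤ P⁻¹/4
    have hre : ((n:ℝ)^((3:ℝ)/2))⁻¹ * (n:ℝ)^2 = (n:ℝ)^((1:ℝ)/2) := by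
      rw [← hid]; field_simp
    have h5 : σ * (c^2 / (n:ℝ)^2) ≤ ((n:ℝ) ^ ((3:ℝ)/2))⁻¹ / 4 := by
      rw [show σ * (c^2 / (n:ℝ)^2) = (σ * c^2) / (n:ℝ)^2 by ring,
        div_le_div_iff₀ (pow_pos hn0 2) (by norm_num : (0:ℝ) < 4)]
      rw [show ((n:ℝ)^((3:ℝ)/2))⁻¹ * (n:ℝ)^2 = (n:ℝ)^((1:ℝ)/2) from hre]
      linarith
    -- conclude P⁻¹ ≤ 4 σ m^2
    have hcomb : (1/2) * ((n:ℝ)^((3:ℝ)/2))⁻¹ ≤ σ * (‖xseq n - x‖^2 + (-m)^2) :=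
      le_trans hLn hnp
    have hm2 : ((n:ℝ)^((3:ℝ)/2))⁻¹ ≤ 4 * σ * m^2 := by
      have hh := mul_le_mul_of_nonneg_left hd2 hσpos.le
      nlinarith [hcomb, hh, h5]
    -- 4σ (C/Q)^2 = P⁻¹
    have hCsq : C^2 = 1/(4*σ) := by
      rw [hCdef, div_pow, one_pow, mul_pow, Real.sq_sqrt hσpos.le]
      norm_num
    have hteq : 4 * σ * (C / (n:ℝ)^((3:ℝ)/4))^2 = ((n:ℝ)^((3:ℝ)/2))⁻¹ := by
      rw [div_pow, hidQ, hCsq]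
      field_simp
    have ht2 : (C / (n:ℝ)^((3:ℝ)/4))^2 ≤ m^2 := by
      have h4σ : (0:ℝ) < 4*σ := by linarith
      have hmul : (4*σ) * (C / (n:ℝ)^((3:ℝ)/4))^2 ≤ (4*σ) * m^2 := by
        nlinarith [hteq, hm2]
      exact (mul_le_mul_iff_right₀ h4σ).mp hmul
    have hmt : C / (n:ℝ)^((3:ℝ)/4) ≤ m := sq_le_sq_imp m _ hm0 ht2
    have htpos : 0 < C / (n:ℝ)^((3:ℝ)/4) := div_pos hCpos hQ0
    have hmpos : 0 < m := lt_of_lt_of_le htpos hmt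
    have hmeq : m = f x - f (xseq n) := by
      rcases le_or_gt (f x - f (xseq n)) 0 with h | h
      · exfalso; rw [hmdef, max_eq_left h] at hmpos; exact lt_irrefl _ hmpos
      · rw [hmdef, max_eq_right h.le]
    rw [← hmeq]; exact hmt
  -- ## Step E: convergence facts
  have hxconv : Tendsto xseq atTop (nhds x) := by
    rw [tendsto_iff_norm_sub_tendsto_zero]
    apply squeeze_zero' (Eventually.of_forall fun n => norm_nonneg _)
      (?_ : ∀ᶠ n in atTop, ‖xseq n - x‖ ≤ c / n)
      (tendsto_const_div_atTop_nhds_zero_nat c)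
    filter_upwards [eventually_ge_atTop 1] with n hn
    exact hdist n hn
  have hfconv : Tendsto (fun n => f (xseq n)) atTop (nhds (f x)) :=
    ((hf.continuousAt (hΩ.mem_nhds hx)).tendsto).comp hxconv
  have hΔ0 : Tendsto (fun n => f x - f (xseq n)) atTop (nhds 0) := by
    have h := (tendsto_const_nhds (x := f x) (f := (atTop : Filter ℕ))).sub hfconv
    simpa using h
  have hρx : 0 < ρ x := hρpos x hx
  set K : ℝ := (ρ x)⁻¹ with hKdef
  have hKpos : 0 < K := by positivity
  have hρconv : Tendsto (fun n => ρ (xseq n)) atTop (nhds (ρ x)) :=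
    ((hρc.continuousAt (hΩ.mem_nhds hx)).tendsto).comp hxconv
  have hρev : ∀ᶠ n in atTop, ρ x / 2 ≤ ρ (xseq n) :=
    hρconv.eventually (eventually_ge_nhds (by linarith))
  -- ## Step F: gradient blow-up
  have hgrad : Tendsto (fun n => ‖gradient f (xseq n)‖) atTop atTop := by
    rw [tendsto_atTop]
    intro b
    set M : ℝ := max b 1 with hMdef
    have hM1 : (1:ℝ) ≤ M := le_max_right _ _
    have hMb : b ≤ M := le_max_left _ _
    have hMpos : (0:ℝ) < M := by linarith
    have h6M : (0:ℝ) < 6*M := by linarith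
    have h3M : (0:ℝ) < 3*M := by linarith
    have h6MK : (0:ℝ) < 6*M*K := by
      have := mul_pos h6M hKpos; linarith [mul_pos h6M hKpos]
    have hE6 : ∀ᶠ n in atTop, f x - f (xseq n) ≤ 1/(6*M*K) :=
      hΔ0.eventually (eventually_le_nhds (one_div_pos.mpr h6MK))
    filter_upwards [hDelta, hρev, hE6,
      eventually_le_rpow' (6*M*c/C) (1/4) (by norm_num),
      eventually_le_rpow' (6*M*K*c^2/C) (5/4) (by norm_num),
      eventually_ge_atTop 1] with n h1 h2 h6 h3 h4 hn
    have h1n : (1:ℝ) ≤ (n:ℝ) := by exact_mod_cast hn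
    have hn0 : (0:ℝ) < (n:ℝ) := by linarith
    have hQ0 : (0:ℝ) < (n:ℝ) ^ ((3:ℝ)/4) := Real.rpow_pos_of_pos hn0 _
    set Δ : ℝ := f x - f (xseq n) with hΔdef
    have hΔpos : 0 < Δ := lt_of_lt_of_le (div_pos hCpos hQ0) h1
    set g := gradient f (xseq n) with hgdef
    have hg0 : (0:ℝ) ≤ ‖g‖ := norm_nonneg _
    have hρn : 0 < ρ (xseq n) := hρpos _ (hseqΩ n)
    have hxy : ‖x - xseq n‖ ≤ c / n := by
      rw [norm_sub_rev]; exact hdist n hn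
    have hxy0 : (0:ℝ) ≤ ‖x - xseq n‖ := norm_nonneg _
    -- identities
    have hid1 : (n:ℝ)^((1:ℝ)/4) * (n:ℝ)^((3:ℝ)/4) = (n:ℝ) := by
      rw [← Real.rpow_add hn0]; norm_num
    have hid2 : (n:ℝ)^((5:ℝ)/4) * (n:ℝ)^((3:ℝ)/4) = (n:ℝ)^2 := by
      rw [← Real.rpow_add hn0, ← Real.rpow_natCast (n:ℝ) 2]; norm_num
    -- hA : ‖x - y‖ ≤ Δ/(6M)
    have hcn : c / (n:ℝ) ≤ Δ / (6*M) := by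
      have hstep : c / (n:ℝ) ≤ (C / (n:ℝ)^((3:ℝ)/4)) / (6*M) := by
        rw [div_div, div_le_div_iff₀ hn0 (mul_pos hQ0 h6M)]
        have h3' : 6*M*c ≤ C * (n:ℝ)^((1:ℝ)/4) := by
          rw [div_le_iff₀ hCpos] at h3; linarith
        calc c * ((n:ℝ)^((3:ℝ)/4) * (6*M)) = (6*M*c) * (n:ℝ)^((3:ℝ)/4) := by ring
          _ ≤ (C * (n:ℝ)^((1:ℝ)/4)) * (n:ℝ)^((3:ℝ)/4) :=
              mul_le_mul_of_nonneg_right h3' hQ0.le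
          _ = C * (n:ℝ) := by rw [mul_assoc, hid1]
      calc c / (n:ℝ) ≤ (C / (n:ℝ)^((3:ℝ)/4)) / (6*M) := hstep
        _ ≤ Δ / (6*M) := by gcongr
    have hA : ‖x - xseq n‖ ≤ Δ / (6*M) := le_trans hxy hcn
    -- hB : K ‖x - y‖^2 ≤ Δ/(6M)
    have hB : K * ‖x - xseq n‖^2 ≤ Δ / (6*M) := by
      have hxy2 : ‖x - xseq n‖^2 ≤ c^2 / (n:ℝ)^2 := by
        rw [(div_pow c (n:ℝ) 2).symm]
        exact pow_le_pow_left₀ hxy0 hxy 2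
      have hstep : K * (c^2 / (n:ℝ)^2) ≤ (C / (n:ℝ)^((3:ℝ)/4)) / (6*M) := by
        rw [show K * (c^2 / (n:ℝ)^2) = (K*c^2) / (n:ℝ)^2 by ring, div_div,
          div_le_div_iff₀ (pow_pos hn0 2) (mul_pos hQ0 h6M)]
        have h4' : 6*M*K*c^2 ≤ C * (n:ℝ)^((5:ℝ)/4) := by
          rw [div_le_iff₀ hCpos] at h4; linarith
        calc K*c^2 * ((n:ℝ)^((3:ℝ)/4) * (6*M)) = (6*M*K*c^2) * (n:ℝ)^((3:ℝ)/4) := by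
              ring
          _ ≤ (C * (n:ℝ)^((5:ℝ)/4)) * (n:ℝ)^((3:ℝ)/4) :=
              mul_le_mul_of_nonneg_right h4' hQ0.le
          _ = C * (n:ℝ)^2 := by rw [mul_assoc, hid2]
      calc K * ‖x - xseq n‖^2 ≤ K * (c^2 / (n:ℝ)^2) := by gcongr
        _ ≤ (C / (n:ℝ)^((3:ℝ)/4)) / (6*M) := hstep
        _ ≤ Δ / (6*M) := by gcongr
    -- hCC : K Δ^2 ≤ Δ/(6M)
    have hCC : K * Δ^2 ≤ Δ / (6*M) := by
      have h6' : Δ * (6*M*K) ≤ 1 := by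
        rw [le_div_iff₀ h6MK] at h6; exact h6
      rw [le_div_iff₀ h6M]
      nlinarith [hΔpos]
    -- main inequality from hgradsphere
    have hg := hgradsphere (xseq n) (hseqΩ n) (hdiff n) x hx (f x) le_rfl
    rw [inner_neg_left] at hg
    rw [show gradient f (xseq n) = g from hgdef.symm] at hg
    rw [show f x - f (xseq n) = Δ from hΔdef.symm] at hg
    have hinn : (inner ℝ g (x - xseq n) : ℝ) ≤ ‖g‖ * ‖x - xseq n‖ :=
      real_inner_le_norm _ _
    have hS0 : (0:ℝ) ≤ ‖x - xseq n‖^2 + Δ^2 := by positivity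
    have hfrac : Real.sqrt (‖g‖^2 + 1) / (2 * ρ (xseq n)) ≤ (‖g‖ + 1) * K := by
      have hsq := sqrt_sq_add_one_le ‖g‖ hg0
      have hinv : (2 * ρ (xseq n))⁻¹ ≤ K := by
        rw [hKdef]
        apply inv_anti₀ hρx
        linarith
      rw [div_eq_mul_inv]
      exact mul_le_mul hsq hinv (inv_nonneg.mpr (by linarith)) (by positivity)
    have hmain : Δ ≤ ‖g‖ * ‖x - xseq n‖
        + (‖g‖ + 1) * (K * (‖x - xseq n‖^2 + Δ^2)) := by
      have hrhs : (Real.sqrt (‖g‖^2 + 1) / (2 * ρ (xseq n))) * (‖x - xseq n‖^2 + Δ^2)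
          ≤ (‖g‖ + 1) * (K * (‖x - xseq n‖^2 + Δ^2)) := by
        rw [← mul_assoc]
        exact mul_le_mul_of_nonneg_right hfrac hS0
      calc Δ = (-(inner ℝ g (x - xseq n) : ℝ) + Δ) + (inner ℝ g (x - xseq n) : ℝ) := by
            ring
        _ ≤ Real.sqrt (‖g‖^2 + 1) / (2 * ρ (xseq n)) * (‖x - xseq n‖^2 + Δ^2)
            + ‖g‖ * ‖x - xseq n‖ := add_le_add hg hinn
        _ ≤ (‖g‖ + 1) * (K * (‖x - xseq n‖^2 + Δ^2)) + ‖g‖ * ‖x - xseq n‖ :=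
            add_le_add_left hrhs _
        _ = ‖g‖ * ‖x - xseq n‖ + (‖g‖ + 1) * (K * (‖x - xseq n‖^2 + Δ^2)) := by
            ring
    -- combine
    have hKS : K * (‖x - xseq n‖^2 + Δ^2) ≤ Δ / (3*M) := by
      have hsplit : K * (‖x - xseq n‖^2 + Δ^2) = K * ‖x - xseq n‖^2 + K * Δ^2 := by
        ring
      have hsum : Δ / (6*M) + Δ / (6*M) = Δ / (3*M) := by
        field_simp; ring
      rw [hsplit]; linarith
    have hfin : Δ ≤ ‖g‖ * (Δ/(6*M)) + (‖g‖ + 1) * (Δ/(3*M)) := by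
      calc Δ ≤ ‖g‖ * ‖x - xseq n‖ + (‖g‖ + 1) * (K * (‖x - xseq n‖^2 + Δ^2)) := hmain
        _ ≤ ‖g‖ * (Δ/(6*M)) + (‖g‖ + 1) * (Δ/(3*M)) := by
            gcongr <;> linarith
    have hfin2 : Δ * (6*M) ≤ (3*‖g‖ + 2) * Δ := by
      have heq : ‖g‖ * (Δ/(6*M)) + (‖g‖ + 1) * (Δ/(3*M)) = (3*‖g‖ + 2) * Δ / (6*M) := by
        field_simp; ring
      rw [heq, le_div_iff₀ h6M] at hfin
      exact hfin
    have hg6 : 6*M ≤ 3*‖g‖ + 2 := by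
      have hmm : (6*M) * Δ ≤ (3*‖g‖ + 2) * Δ := by linarith
      exact le_of_mul_le_mul_right (by linarith [hmm]) hΔpos
    linarith
  -- ## Conclusion
  refine ⟨⟨C, hCpos, ?_⟩, hgrad⟩
  obtain ⟨N₀, hN₀⟩ := eventually_atTop.mp hDelta
  exact ⟨N₀, hN₀⟩
end

section
/- Let U be a compact nonempty subset of ℝ^m, f: ℝ^d × U → ℝ^d continuous, bounded by N, and Lipschitz in x uniformly in ω, and r: ℝ^d × U → ℝ continuous with r ≥ r₀ > 0, Lipschitz in x uniformly in ω. Let V be the value function of the exit-time problem with target S and terminal cost g, and suppose V is continuous. Let y: [0,τ] → ℝ^d be an optimal trajectory with control u, starting at x ∈ Sᶜ, and let t ∈ (0,τ) be such that p ∈ ∂^P V(y(t)) for some p ∈ ℝ^d and t is a Lebesgue point of s ↦ (f(y(s),u(s)), r(y(s),u(s))). Then −p·f(y(t),u(t)) − r(y(t),u(t)) ≥ 0, i.e. H(y(t),p) ≥ 0 where H(x,p) = max_{ω∈U}(−p·f(x,ω) − r(x,ω)). -/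
open MeasureTheory

/-- (Maximum principle inequality at a Lebesgue point.)  Along an
optimal trajectory `y` with control `u` for the exit-time problem with continuous value
function `V`, if `p ∈ ∂^P V(y(t))` and `t ∈ (0, τ)` is a Lebesgue point of
`s ↦ (f(y(s), u(s)), r(y(s), u(s)))`, then `-p·f(y(t), u(t)) - r(y(t), u(t)) ≥ 0`,
i.e. `H(y(t), p) ≥ 0`. -/
theorem hamiltonian_nonneg_along_optimal {d m : ℕ}
    (U : Set (EuclideanSpace ℝ (Fin m))) (hUc : IsCompact U) (hUne : U.Nonempty)
    (f : EuclideanSpace ℝ (Fin d) → EuclideanSpace ℝ (Fin m) → EuclideanSpace ℝ (Fin d))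
    (r : EuclideanSpace ℝ (Fin d) → EuclideanSpace ℝ (Fin m) → ℝ)
    (N r₀ : ℝ) (hN : 0 < N) (hr₀ : 0 < r₀)
    (hfc : Continuous fun q : EuclideanSpace ℝ (Fin d) × EuclideanSpace ℝ (Fin m) =>
      f q.1 q.2)
    (hrc : Continuous fun q : EuclideanSpace ℝ (Fin d) × EuclideanSpace ℝ (Fin m) =>
      r q.1 q.2)
    (hfb : ∀ x, ∀ ω ∈ U, ‖f x ω‖ ≤ N)
    (hrb : ∀ x, ∀ ω ∈ U, r₀ ≤ r x ω)
    (S : Set (EuclideanSpace ℝ (Fin d))) (hS : IsClosed S)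
    (V : EuclideanSpace ℝ (Fin d) → ℝ) (hV : Continuous V)
    (y : ℝ → EuclideanSpace ℝ (Fin d)) (u : ℝ → EuclideanSpace ℝ (Fin m))
    (τ : ℝ) (hτ : 0 < τ)
    (hy0 : y 0 ∉ S) (hyS : ∀ s ∈ Set.Ico (0:ℝ) τ, y s ∉ S) (hyτ : y τ ∈ S)
    (hu : ∀ s, u s ∈ U)
    (hintegrable : ∀ t ∈ Set.Icc (0:ℝ) τ,
      IntervalIntegrable (fun s => f (y s) (u s)) volume 0 t ∧
      IntervalIntegrable (fun s => r (y s) (u s)) volume 0 t)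
    (htraj : ∀ t ∈ Set.Icc (0:ℝ) τ, y t = y 0 + ∫ s in (0:ℝ)..t, f (y s) (u s))
    -- optimality via the dynamic programming principle along `y`
    (hDPP : ∀ t₁ ∈ Set.Icc (0:ℝ) τ, ∀ t₂ ∈ Set.Icc (0:ℝ) τ, t₁ ≤ t₂ →
      V (y t₁) = (∫ s in t₁..t₂, r (y s) (u s)) + V (y t₂))
    (t : ℝ) (ht : t ∈ Set.Ioo 0 τ) (p : EuclideanSpace ℝ (Fin d))
    -- `p` is a proximal supergradient of `V` at `y t`
    (hp : ∃ σ η : ℝ, 0 < σ ∧ 0 < η ∧ ∀ w, ‖w - y t‖ < η →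
      V w ≤ V (y t) + (inner ℝ p (w - y t) : ℝ) + σ * ‖w - y t‖ ^ 2)
    -- `t` is a Lebesgue point of `s ↦ f(y s, u s)` and of `s ↦ r(y s, u s)`
    (hLebf : Filter.Tendsto (fun ε : ℝ => ε⁻¹ • ∫ s in (t - ε)..t, f (y s) (u s))
      (nhdsWithin 0 (Set.Ioi 0)) (nhds (f (y t) (u t))))
    (hLebr : Filter.Tendsto (fun ε : ℝ => ε⁻¹ * ∫ s in (t - ε)..t, r (y s) (u s))
      (nhdsWithin 0 (Set.Ioi 0)) (nhds (r (y t) (u t)))) :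
    0 ≤ -(inner ℝ p (f (y t) (u t)) : ℝ) - r (y t) (u t) := by

  obtain ⟨σ, η, hσ, hη, hsup⟩ := hp
  obtain ⟨ht0, htτ⟩ := ht
  have htmem : t ∈ Set.Icc (0:ℝ) τ := ⟨ht0.le, htτ.le⟩
  have hcpos : 0 < min t (η / N) := lt_min ht0 (div_pos hη hN)
  have hev : ∀ᶠ ε in nhdsWithin (0:ℝ) (Set.Ioi 0),
      ε⁻¹ * ∫ s in (t - ε)..t, r (y s) (u s)
        ≤ -(inner ℝ p (ε⁻¹ • ∫ s in (t - ε)..t, f (y s) (u s)) : ℝ) + σ * N ^ 2 * ε := by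
    filter_upwards [Ioo_mem_nhdsGT_of_mem ⟨le_refl (0:ℝ), hcpos⟩] with ε hε
    obtain ⟨hε0, hεc⟩ := hε
    have hεt : ε ≤ t := (lt_of_lt_of_le hεc (min_le_left _ _)).le
    have hεη : ε < η / N := lt_of_lt_of_le hεc (min_le_right _ _)
    have htεmem : t - ε ∈ Set.Icc (0:ℝ) τ := ⟨by linarith, by linarith⟩
    have hf1 := (hintegrable t htmem).1
    have hf2 := (hintegrable (t - ε) htεmem).1
    have hydiff : y (t - ε) - y t = -∫ s in (t - ε)..t, f (y s) (u s) := by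
      rw [htraj t htmem, htraj (t - ε) htεmem,
        show ∀ a b c : EuclideanSpace ℝ (Fin d), (a + b) - (a + c) = b - c from
          fun a b c => by abel,
        intervalIntegral.integral_interval_sub_left hf2 hf1,
        intervalIntegral.integral_symm]
    have hnorm : ‖∫ s in (t - ε)..t, f (y s) (u s)‖ ≤ N * ε := by
      have h := intervalIntegral.norm_integral_le_of_norm_le_const
        (a := t - ε) (b := t) (C := N) (f := fun s => f (y s) (u s))
        (fun s _ => hfb (y s) (u s) (hu s))
      have : |t - (t - ε)| = ε := by rw [abs_of_nonneg] <;> linarith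
      rwa [this] at h
    have hclose : ‖y (t - ε) - y t‖ < η := by
      rw [hydiff, norm_neg]
      calc ‖∫ s in (t - ε)..t, f (y s) (u s)‖ ≤ N * ε := hnorm
        _ < N * (η / N) := by exact mul_lt_mul_of_pos_left hεη hN
        _ = η := by field_simp
    have hsg := hsup (y (t - ε)) hclose
    have hdpp := hDPP (t - ε) htεmem t htmem (by linarith)
    set I := ∫ s in (t - ε)..t, f (y s) (u s) with hI
    set R := ∫ s in (t - ε)..t, r (y s) (u s) with hR
    have hinner : (inner ℝ p (y (t - ε) - y t) : ℝ) = -(inner ℝ p I : ℝ) := by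
      rw [hydiff, inner_neg_right]
    have hnn : ‖y (t - ε) - y t‖ = ‖I‖ := by rw [hydiff, norm_neg]
    have h1 : R ≤ -(inner ℝ p I : ℝ) + σ * (N * ε) ^ 2 := by
      rw [hdpp] at hsg
      rw [hinner, hnn] at hsg
      nlinarith [norm_nonneg I, hσ.le, mul_self_le_mul_self (norm_nonneg I) hnorm, sq_abs (N*ε)]
    have h2 : ε⁻¹ * R ≤ ε⁻¹ * (-(inner ℝ p I : ℝ) + σ * (N * ε) ^ 2) :=
      mul_le_mul_of_nonneg_left h1 (inv_nonneg.2 hε0.le)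
    have h3 : ε⁻¹ * (-(inner ℝ p I : ℝ) + σ * (N * ε) ^ 2)
        = -(ε⁻¹ * (inner ℝ p I : ℝ)) + σ * N ^ 2 * ε := by
      field_simp
    rw [real_inner_smul_right]
    linarith [h2, h3.symm.le]
  have hlimR : Filter.Tendsto
      (fun ε : ℝ => -(inner ℝ p (ε⁻¹ • ∫ s in (t - ε)..t, f (y s) (u s)) : ℝ) + σ * N ^ 2 * ε)
      (nhdsWithin (0:ℝ) (Set.Ioi 0))
      (nhds (-(inner ℝ p (f (y t) (u t)) : ℝ) + σ * N ^ 2 * 0)) := by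
    exact ((Filter.Tendsto.inner tendsto_const_nhds hLebf).neg).add
      ((((continuous_const.mul continuous_id).tendsto (0:ℝ)).mono_left nhdsWithin_le_nhds))
  have hfin : r (y t) (u t) ≤ -(inner ℝ p (f (y t) (u t)) : ℝ) + σ * N ^ 2 * 0 :=
    le_of_tendsto_of_tendsto hLebr hlimR hev
  linarith [hfin]
end

section
/- Let V: Sᶜ → ℝ be continuous and satisfy the dynamic programming principle for the exit-time problem with dynamics f bounded by N and running cost r ≥ r₀ > 0. Let y(·) be an optimal trajectory crossing a point z = y(t) at time t > 0 before reaching the target, and let ξ ∈ ∂^∞V(z) be a proximal horizontal supergradient. Then sup_{ω∈U} (−ξ·f(z,ω)) ≥ 0. -/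
open MeasureTheory

set_option maxHeartbeats 1000000 in
/-- If `y` is an optimal trajectory crossing `z = y(t)` at time
`t > 0` before reaching the target, and `ξ ∈ ∂^∞ V(z)` is a proximal horizontal
supergradient of the value function, then `sup_{ω ∈ U} (-ξ·f(z, ω)) ≥ 0`. -/
theorem horizontal_hamiltonian_nonneg_at_optimal_point {d m : ℕ}
    (U : Set (EuclideanSpace ℝ (Fin m))) (hUc : IsCompact U) (hUne : U.Nonempty)
    (f : EuclideanSpace ℝ (Fin d) → EuclideanSpace ℝ (Fin m) → EuclideanSpace ℝ (Fin d))
    (r : EuclideanSpace ℝ (Fin d) → EuclideanSpace ℝ (Fin m) → ℝ)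
    (N r₀ : ℝ) (hN : 0 < N) (hr₀ : 0 < r₀)
    (hfc : Continuous fun q : EuclideanSpace ℝ (Fin d) × EuclideanSpace ℝ (Fin m) =>
      f q.1 q.2)
    (hrc : Continuous fun q : EuclideanSpace ℝ (Fin d) × EuclideanSpace ℝ (Fin m) =>
      r q.1 q.2)
    (hfb : ∀ x, ∀ ω ∈ U, ‖f x ω‖ ≤ N)
    (hrb : ∀ x, ∀ ω ∈ U, r₀ ≤ r x ω)
    (S : Set (EuclideanSpace ℝ (Fin d))) (hS : IsClosed S)
    (V : EuclideanSpace ℝ (Fin d) → ℝ) (hV : Continuous V)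
    (y : ℝ → EuclideanSpace ℝ (Fin d)) (u : ℝ → EuclideanSpace ℝ (Fin m))
    (τ : ℝ) (hτ : 0 < τ)
    (hyS : ∀ s ∈ Set.Ico (0:ℝ) τ, y s ∉ S) (hyτ : y τ ∈ S)
    (hu : ∀ s, u s ∈ U)
    (hintegrable : ∀ t ∈ Set.Icc (0:ℝ) τ,
      IntervalIntegrable (fun s => f (y s) (u s)) volume 0 t ∧
      IntervalIntegrable (fun s => r (y s) (u s)) volume 0 t)
    (htraj : ∀ t ∈ Set.Icc (0:ℝ) τ, y t = y 0 + ∫ s in (0:ℝ)..t, f (y s) (u s))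
    -- optimality via the dynamic programming principle along `y`
    (hDPP : ∀ t₁ ∈ Set.Icc (0:ℝ) τ, ∀ t₂ ∈ Set.Icc (0:ℝ) τ, t₁ ≤ t₂ →
      V (y t₁) = (∫ s in t₁..t₂, r (y s) (u s)) + V (y t₂))
    (t : ℝ) (ht : t ∈ Set.Ioc 0 τ) (ξ : EuclideanSpace ℝ (Fin d))
    -- `ξ` is a proximal horizontal supergradient of `V` at `z = y t`
    (hξ : ∃ σ : ℝ, 0 < σ ∧ ∀ w, ∀ β : ℝ, β ≤ V w →
      (inner ℝ (-ξ) (w - y t) : ℝ) ≤ σ * (‖w - y t‖ ^ 2 + (β - V (y t)) ^ 2)) :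
    0 ≤ sSup ((fun ω => -(inner ℝ ξ (f (y t) ω) : ℝ)) '' U) := by
  obtain ⟨ht0, htτ⟩ := ht
  obtain ⟨σ, hσ, hprox⟩ := hξ
  set z := y t with hz
  have hIcc : t ∈ Set.Icc (0:ℝ) τ := ⟨le_of_lt ht0, htτ⟩
  -- the compact set on which we get uniform bounds
  set B := Metric.closedBall z 1 with hB
  have hBc : IsCompact B := isCompact_closedBall z 1
  set C := B ×ˢ U with hC
  have hCc : IsCompact C := hBc.prod hUc
  -- bound on the running cost on C
  obtain ⟨R₀, hR₀⟩ := hCc.exists_bound_of_continuousOn hrc.continuousOn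
  set R : ℝ := max R₀ 0 with hRdef
  have hR : ∀ p ∈ C, |r p.1 p.2| ≤ R := fun p hp =>
    le_trans (hR₀ p hp) (le_max_left _ _)
  have hRnn : 0 ≤ R := le_max_right _ _
  -- uniform continuity of f on C
  have hfu := Metric.uniformContinuousOn_iff.mp
    (hCc.uniformContinuousOn_of_continuous hfc.continuousOn)
  -- the sup
  set g : EuclideanSpace ℝ (Fin m) → ℝ := fun ω => -(inner ℝ ξ (f z ω) : ℝ) with hg
  have hgc : ContinuousOn g U := by
    apply Continuous.continuousOn
    exact (continuous_const.inner (hfc.comp (Continuous.prodMk_right z))).neg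
  have hbdd : BddAbove (g '' U) := (hUc.image_of_continuousOn hgc).bddAbove
  set M : ℝ := sSup (g '' U) with hM
  have hle : ∀ ω ∈ U, g ω ≤ M := fun ω hω => le_csSup hbdd ⟨ω, hω, rfl⟩
  show (0:ℝ) ≤ M
  -- positive constant
  set Cst : ℝ := σ * (N ^ 2 + R ^ 2) with hCst
  have hCst0 : 0 < Cst := by positivity
  refine le_of_forall_pos_le_add (fun θ hθ => ?_)
  -- choose η and δ
  set η : ℝ := θ / (2 * (‖ξ‖ + 1)) with hη
  have hη0 : 0 < η := by positivity
  obtain ⟨δ, hδ0, hδ⟩ := hfu η hη0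
  -- choose ε
  set ε : ℝ := min (min t (1 / N)) (min (δ / (2 * N)) (θ / (2 * Cst))) with hε
  have hε0 : 0 < ε := by
    apply lt_min (lt_min ht0 (by positivity)) (lt_min (by positivity) (by positivity))
  have hεt : ε ≤ t := le_trans (min_le_left _ _) (min_le_left _ _)
  have hεN1 : N * ε ≤ 1 := by
    have : ε ≤ 1 / N := le_trans (min_le_left _ _) (min_le_right _ _)
    rw [le_div_iff₀ hN] at this; linarith
  have hεδ : N * ε < δ := by
    have : ε ≤ δ / (2 * N) := le_trans (min_le_right _ _) (min_le_left _ _)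
    have h2 : N * ε ≤ δ / 2 := by
      rw [le_div_iff₀ (by positivity)] at this
      linarith
    linarith
  have hεθ : Cst * ε ≤ θ / 2 := by
    have : ε ≤ θ / (2 * Cst) := le_trans (min_le_right _ _) (min_le_right _ _)
    rw [le_div_iff₀ (by positivity)] at this
    linarith
  have hIcc' : t - ε ∈ Set.Icc (0:ℝ) τ := ⟨by linarith, by linarith⟩
  have htε : t - ε ≤ t := by linarith
  -- integrability on [t-ε, t]
  have hf_int : IntervalIntegrable (fun s => f (y s) (u s)) volume (t - ε) t :=
    ((hintegrable _ hIcc').1).symm.trans (hintegrable _ hIcc).1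
  have hr_int : IntervalIntegrable (fun s => r (y s) (u s)) volume (t - ε) t :=
    ((hintegrable _ hIcc').2).symm.trans (hintegrable _ hIcc).2
  -- trajectory displacement
  have hdisp : ∀ s ∈ Set.Icc (t - ε) t, ‖y s - z‖ ≤ N * ε := by
    intro s hs
    have hsIcc : s ∈ Set.Icc (0:ℝ) τ := ⟨by cases hs; linarith, by cases hs; linarith⟩
    have hs_int : IntervalIntegrable (fun s' => f (y s') (u s')) volume s t :=
      ((hintegrable _ hsIcc).1).symm.trans (hintegrable _ hIcc).1
    have heq : z - y s = ∫ s' in s..t, f (y s') (u s') := by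
      rw [hz, htraj t hIcc, htraj s hsIcc]
      have := intervalIntegral.integral_interval_sub_left
        (hintegrable t hIcc).1 (hintegrable s hsIcc).1
      rw [← this]; abel
    have hnorm : ‖z - y s‖ ≤ N * |t - s| := by
      rw [heq]
      exact intervalIntegral.norm_integral_le_of_norm_le_const
        (fun x _ => hfb (y x) (u x) (hu x))
    have h1 : |t - s| ≤ ε := by
      rw [abs_of_nonneg (by cases hs; linarith)]
      cases hs; linarith
    calc ‖y s - z‖ = ‖z - y s‖ := by rw [norm_sub_rev]
      _ ≤ N * |t - s| := hnorm
      _ ≤ N * ε := by nlinarith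
  -- membership in C
  have hmem : ∀ s ∈ Set.Icc (t - ε) t, ((y s, u s) : _ × _) ∈ C := by
    intro s hs
    refine ⟨?_, hu s⟩
    rw [hB, Metric.mem_closedBall, dist_eq_norm]
    exact le_trans (hdisp s hs) hεN1
  have hzmem : ∀ s : ℝ, ((z, u s) : _ × _) ∈ C := fun s =>
    ⟨Metric.mem_closedBall_self (by norm_num), hu s⟩
  -- pointwise closeness of f
  have hfclose : ∀ s ∈ Set.Icc (t - ε) t, ‖f z (u s) - f (y s) (u s)‖ ≤ η := by
    intro s hs
    have hd : dist ((y s, u s) : _ × _) (z, u s) < δ := by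
      rw [Prod.dist_eq]
      simp only [dist_self, dist_eq_norm]
      rw [max_eq_left (norm_nonneg _)]
      exact lt_of_le_of_lt (hdisp s hs) hεδ
    have := hδ (y s, u s) (hmem s hs) (z, u s) (hzmem s) hd
    rw [dist_eq_norm, norm_sub_rev] at this
    exact le_of_lt this
  -- pointwise bound on the integrand
  have hφbound : ∀ s ∈ Set.Icc (t - ε) t,
      -(inner ℝ ξ (f (y s) (u s)) : ℝ) ≤ M + ‖ξ‖ * η := by
    intro s hs
    have h1 : -(inner ℝ ξ (f (y s) (u s)) : ℝ)
        = g (u s) + (inner ℝ ξ (f z (u s) - f (y s) (u s)) : ℝ) := by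
      rw [hg]; simp only [inner_sub_right]; ring
    rw [h1]
    have h2 : (inner ℝ ξ (f z (u s) - f (y s) (u s)) : ℝ) ≤ ‖ξ‖ * η := by
      calc (inner ℝ ξ (f z (u s) - f (y s) (u s)) : ℝ)
          ≤ ‖ξ‖ * ‖f z (u s) - f (y s) (u s)‖ := real_inner_le_norm _ _
        _ ≤ ‖ξ‖ * η := by
            exact mul_le_mul_of_nonneg_left (hfclose s hs) (norm_nonneg _)
    have h3 : g (u s) ≤ M := hle (u s) (hu s)
    linarith
  -- integrability of the integrand
  have hφ_int : IntervalIntegrable (fun s => (inner ℝ ξ (f (y s) (u s)) : ℝ))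
      volume (t - ε) t := by
    have h1 : IntervalIntegrable (fun s => (innerSL ℝ ξ) (f (y s) (u s)))
        volume (t - ε) t :=
      ⟨(innerSL ℝ ξ).integrable_comp hf_int.1, (innerSL ℝ ξ).integrable_comp hf_int.2⟩
    simpa using h1
  -- DPP : value difference
  have hw : V (y (t - ε)) - V z = ∫ s in (t - ε)..t, r (y s) (u s) := by
    have := hDPP (t - ε) hIcc' t hIcc htε
    rw [hz]; linarith
  -- bound on cost integral
  have hcost : |∫ s in (t - ε)..t, r (y s) (u s)| ≤ R * ε := by
    have h1 : ‖∫ s in (t - ε)..t, r (y s) (u s)‖ ≤ R * |t - (t - ε)| := by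
      apply intervalIntegral.norm_integral_le_of_norm_le_const
      intro x hx
      rw [Set.uIoc_of_le htε] at hx
      have hxIcc : x ∈ Set.Icc (t - ε) t := ⟨le_of_lt hx.1, hx.2⟩
      have := hR (y x, u x) (hmem x hxIcc)
      simpa using this
    have h2 : |t - (t - ε)| = ε := by rw [abs_of_nonneg (by linarith)]; ring
    rw [h2] at h1
    simpa using h1
  -- displacement bound
  have hwd : ‖y (t - ε) - z‖ ≤ N * ε :=
    hdisp (t - ε) ⟨le_refl _, htε⟩
  -- the proximal inequality applied to w = y(t-ε), β = V(y(t-ε))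
  have hkey : (∫ s in (t - ε)..t, (inner ℝ ξ (f (y s) (u s)) : ℝ)) ≤ Cst * ε ^ 2 := by
    have heq0 : z - y (t - ε) = ∫ s in (t - ε)..t, f (y s) (u s) := by
      rw [hz, htraj t hIcc, htraj (t - ε) hIcc']
      have := intervalIntegral.integral_interval_sub_left
        (hintegrable t hIcc).1 (hintegrable (t - ε) hIcc').1
      rw [← this]; abel
    have hinner : (∫ s in (t - ε)..t, (inner ℝ ξ (f (y s) (u s)) : ℝ))
        = (inner ℝ (-ξ) (y (t - ε) - z) : ℝ) := by
      have h1 : (∫ s in (t - ε)..t, (innerSL ℝ ξ) (f (y s) (u s)))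
          = (innerSL ℝ ξ) (∫ s in (t - ε)..t, f (y s) (u s)) :=
        (innerSL ℝ ξ).intervalIntegral_comp_comm hf_int
      have h2 : (inner ℝ (-ξ) (y (t - ε) - z) : ℝ) = (inner ℝ ξ (z - y (t - ε)) : ℝ) := by
        rw [inner_neg_left, ← inner_neg_right]; congr 1; abel
      rw [h2, heq0]
      simpa using h1
    have hpx := hprox (y (t - ε)) (V (y (t - ε))) (le_refl _)
    have hb1 : ‖y (t - ε) -z‖ ^ 2 ≤ (N * ε) ^ 2 := by
      exact pow_le_pow_left₀ (norm_nonneg _) hwd 2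
    have hb2 : (V (y (t - ε)) - V z) ^ 2 ≤ (R * ε) ^ 2 := by
      rw [hw, ← sq_abs]
      exact pow_le_pow_left₀ (abs_nonneg _) hcost 2
    have : (inner ℝ (-ξ) (y (t - ε) - z) : ℝ)
        ≤ σ * ((N * ε) ^ 2 + (R * ε) ^ 2) := by
      refine le_trans hpx ?_
      apply mul_le_mul_of_nonneg_left _ (le_of_lt hσ)
      exact add_le_add hb1 hb2
    rw [hinner]
    calc (inner ℝ (-ξ) (y (t - ε) - z) : ℝ) ≤ σ * ((N * ε) ^ 2 + (R * ε) ^ 2) := this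
      _ = Cst * ε ^ 2 := by rw [hCst]; ring
  -- upper bound on minus integral
  have hup : (∫ s in (t - ε)..t, -(inner ℝ ξ (f (y s) (u s)) : ℝ))
      ≤ (M + ‖ξ‖ * η) * ε := by
    have h1 := intervalIntegral.integral_mono_on htε hφ_int.neg
      (intervalIntegrable_const (c := M + ‖ξ‖ * η)) hφbound
    rw [intervalIntegral.integral_const] at h1
    calc (∫ s in (t - ε)..t, -(inner ℝ ξ (f (y s) (u s)) : ℝ))
        ≤ (t - (t - ε)) • (M + ‖ξ‖ * η) := h1
      _ = (M + ‖ξ‖ * η) * ε := by rw [smul_eq_mul]; ring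
  have hneg : (∫ s in (t - ε)..t, -(inner ℝ ξ (f (y s) (u s)) : ℝ))
      = -(∫ s in (t - ε)..t, (inner ℝ ξ (f (y s) (u s)) : ℝ)) :=
    intervalIntegral.integral_neg
  -- combine
  have hcomb : -(Cst * ε ^ 2) ≤ (M + ‖ξ‖ * η) * ε := by
    rw [hneg] at hup
    linarith
  have hdiv : -(Cst * ε) ≤ M + ‖ξ‖ * η := by
    nlinarith [hcomb, hε0]
  have hξη : ‖ξ‖ * η ≤ θ / 2 := by
    have hx : (0:ℝ) ≤ ‖ξ‖ := norm_nonneg ξ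
    have h2 : (‖ξ‖ + 1) * η = θ / 2 := by
      rw [hη]; field_simp
    have h3 : ‖ξ‖ * η ≤ (‖ξ‖ + 1) * η :=
      mul_le_mul_of_nonneg_right (by linarith) hη0.le
    exact h3.trans h2.le
  linarith
end

section
/- Let S ⊆ ℝ^d be closed with the ρ₀-inner ball property, g: ℝ^d → ℝ Lipschitz with constant G, f bounded by N with GN < r₀, r ≥ r₀, U compact. Fix x ∈ ∂S, q_x ∈ D⁺g(x), and ξ_x ∈ N^P_{closure(Sᶜ)}(x) realized by a ball of radius ρ̄ > 0, and set p_x = q_x − ξ_x. Assume there exists u_x ∈ U with −p_x·f(x,u_x) − r(x,u_x) = 0 = max over U. Then for the constant-control trajectory z₁(s) starting at any z ∈ Sᶜ with control u_x, the function h(t) = ∫₀ᵗ r(z₁(s),u_x) ds + g(z₁(t)) is strictly increasing, and whenever g(z) < β ≤ V(z) there exists t_β > 0 with h(t_β) = β and t_β ≤ (1/(r₀−GN))(|β−g(x)| + G|z−x|). -/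
open MeasureTheory

/-- (From Lemma 3.9.)  With a target `S` having the `ρ₀`-inner ball
property, `g` `G`-Lipschitz, `|f| ≤ N`, `G N < r₀ ≤ r`, fix `x ∈ ∂S`, `q_x ∈ D⁺g(x)`,
`ξ_x` a proximal normal to `closure Sᶜ` at `x` realized by a ball of radius `ρ̄`, and
`u_x ∈ U` attaining `H(x, p_x) = 0` with `p_x = q_x - ξ_x`.  Then for the constant
control trajectory `z₁` from `z ∈ Sᶜ`, `h(t) = ∫₀ᵗ r(z₁(s), u_x) ds + g(z₁(t))` is
strictly increasing, and whenever `g z < β ≤ V z` there is `t_β > 0` with `h(t_β) = β`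
and `t_β ≤ (|β - g x| + G|z - x|)/(r₀ - G N)`. -/
theorem exists_time_level_crossing {d m : ℕ}
    (S : Set (EuclideanSpace ℝ (Fin d))) (hS : IsClosed S)
    (ρ₀ : ℝ) (hρ₀ : 0 < ρ₀)
    (hinner : ∀ x' ∈ frontier S, ∃ ν : EuclideanSpace ℝ (Fin d), ‖ν‖ = 1 ∧
      ∀ y ∈ closure Sᶜ, (inner ℝ ν (y - x') : ℝ) ≤ (1 / (2 * ρ₀)) * ‖y - x'‖ ^ 2)
    (U : Set (EuclideanSpace ℝ (Fin m))) (hUc : IsCompact U) (hUne : U.Nonempty)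
    (f : EuclideanSpace ℝ (Fin d) → EuclideanSpace ℝ (Fin m) → EuclideanSpace ℝ (Fin d))
    (r : EuclideanSpace ℝ (Fin d) → EuclideanSpace ℝ (Fin m) → ℝ)
    (g V : EuclideanSpace ℝ (Fin d) → ℝ)
    (N r₀ G : ℝ) (hN : 0 < N) (hr₀ : 0 < r₀) (hG : 0 ≤ G) (hGN : G * N < r₀)
    (hfb : ∀ x', ∀ ω ∈ U, ‖f x' ω‖ ≤ N)
    (hrb : ∀ x', ∀ ω ∈ U, r₀ ≤ r x' ω)
    (hg : LipschitzWith (Real.toNNReal G) g)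
    (x : EuclideanSpace ℝ (Fin d)) (hx : x ∈ frontier S)
    (q_x ξ_x : EuclideanSpace ℝ (Fin d))
    -- `q_x ∈ D⁺g(x)` (Fréchet superdifferential)
    (hq : ∀ ε > (0:ℝ), ∃ δ > (0:ℝ), ∀ y, ‖y - x‖ < δ →
      g y - g x - (inner ℝ q_x (y - x) : ℝ) ≤ ε * ‖y - x‖)
    (ρbar : ℝ) (hρbar : 0 < ρbar)
    (hξ : ∀ y ∈ closure Sᶜ, (inner ℝ ξ_x (y - x) : ℝ) ≤ (‖ξ_x‖ / (2 * ρbar)) * ‖y - x‖ ^ 2)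
    (u_x : EuclideanSpace ℝ (Fin m)) (hu_x : u_x ∈ U)
    (hHmax : -(inner ℝ (q_x - ξ_x) (f x u_x) : ℝ) - r x u_x = 0)
    (hHle : ∀ ω ∈ U, -(inner ℝ (q_x - ξ_x) (f x ω) : ℝ) - r x ω ≤ 0)
    (z : EuclideanSpace ℝ (Fin d)) (hz : z ∈ Sᶜ)
    (z₁ : ℝ → EuclideanSpace ℝ (Fin d)) (hz₁0 : z₁ 0 = z)
    (hz₁ : ∀ t : ℝ, 0 ≤ t → z₁ t = z + ∫ s in (0:ℝ)..t, f (z₁ s) u_x)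
    (hint : ∀ t : ℝ, IntervalIntegrable (fun s => r (z₁ s) u_x) volume 0 t) :
    StrictMonoOn (fun t => (∫ s in (0:ℝ)..t, r (z₁ s) u_x) + g (z₁ t)) (Set.Ici 0) ∧
    ∀ β : ℝ, g z < β → β ≤ V z →
      ∃ tβ : ℝ, 0 < tβ ∧
        (∫ s in (0:ℝ)..tβ, r (z₁ s) u_x) + g (z₁ tβ) = β ∧
        tβ ≤ (1 / (r₀ - G * N)) * (|β - g x| + G * ‖z - x‖) := by
  set F : ℝ → EuclideanSpace ℝ (Fin d) := fun s => f (z₁ s) u_x with hF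
  set R : ℝ → ℝ := fun s => r (z₁ s) u_x with hR
  set h : ℝ → ℝ := fun t => (∫ s in (0:ℝ)..t, R s) + g (z₁ t) with hh
  have hFb : ∀ s, ‖F s‖ ≤ N := fun s => hfb _ _ hu_x
  have hc : 0 < r₀ - G * N := sub_pos.mpr hGN
  -- Step 1: F is interval integrable on [0, t] for every t ≥ 0.
  have keyA : ∀ t : ℝ, 0 ≤ t → IntervalIntegrable F volume 0 t := by
    by_contra hcon
    push_neg at hcon
    obtain ⟨T, hT0, hTni⟩ := hcon
    set I : Set ℝ := {t : ℝ | 0 ≤ t ∧ IntervalIntegrable F volume 0 t} with hI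
    have hdown : ∀ t ∈ I, ∀ s, 0 ≤ s → s ≤ t → s ∈ I := by
      rintro t ⟨ht0, hti⟩ s hs0 hst
      refine ⟨hs0, hti.mono_set ?_⟩
      rw [Set.uIcc_of_le hs0, Set.uIcc_of_le ht0]
      exact Set.Icc_subset_Icc le_rfl hst
    have h0I : (0:ℝ) ∈ I := ⟨le_refl _, IntervalIntegrable.refl⟩
    have hne : I.Nonempty := ⟨0, h0I⟩
    have hbdd : BddAbove I := by
      refine ⟨T, fun t ht => ?_⟩
      by_contra hlt
      push_neg at hlt
      exact hTni (hdown t ht T hT0 hlt.le).2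
    set a := sSup I with ha
    have ha0 : 0 ≤ a := le_csSup hbdd h0I
    have haT : a ≤ T := csSup_le hne fun t ht => by
      by_contra hlt
      push_neg at hlt
      exact hTni (hdown t ht T hT0 hlt.le).2
    have hgt : ∀ t, a < t → z₁ t = z := by
      intro t hat
      have ht0 : 0 ≤ t := ha0.trans hat.le
      have hni : ¬ IntervalIntegrable F volume 0 t := fun hti =>
        absurd (le_csSup hbdd ⟨ht0, hti⟩) (not_le.mpr hat)
      rw [hz₁ t ht0]
      rw [intervalIntegral.integral_undef hni, add_zero]
    have hFconst : ∀ t, a < t → F t = f z u_x := by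
      intro t hat
      simp only [hF]
      rw [hgt t hat]
    have hlt : ∀ s, 0 ≤ s → s < a → IntervalIntegrable F volume 0 s := by
      intro s hs0 hsa
      obtain ⟨t, htI, hst⟩ := exists_lt_of_lt_csSup hne hsa
      exact (hdown t htI s hs0 hst.le).2
    -- F is a.e. strongly measurable on Ioo 0 a
    have hsm : AEStronglyMeasurable F (volume.restrict (Set.Ioo 0 a)) := by
      rcases eq_or_lt_of_le ha0 with h0a | h0a
      · rw [← h0a, Set.Ioo_self, Measure.restrict_empty]
        exact aestronglyMeasurable_zero_measure F
      · have hcover : Set.Ioo 0 a ⊆ ⋃ n : ℕ, Set.Ioc (0:ℝ) (a - a / (n + 1)) := by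
          intro y hy
          obtain ⟨n, hn⟩ := exists_nat_gt (a / (a - y))
          refine Set.mem_iUnion.mpr ⟨n, hy.1, ?_⟩
          have hay : 0 < a - y := sub_pos.mpr hy.2
          have h1 : a / (a - y) < (n : ℝ) + 1 := hn.trans (lt_add_one _)
          have h2 : a < ((n : ℝ) + 1) * (a - y) := by
            rwa [div_lt_iff₀ hay] at h1
          have hn1 : (0:ℝ) < (n : ℝ) + 1 := by positivity
          have h3 : a / ((n : ℝ) + 1) < a - y := by
            rw [div_lt_iff₀ hn1]
            linarith [h2]
          linarith [h3]
        have hU : AEStronglyMeasurable F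
            (volume.restrict (⋃ n : ℕ, Set.Ioc (0:ℝ) (a - a / (n + 1)))) := by
          rw [aestronglyMeasurable_iUnion_iff]
          intro n
          set c : ℝ := a - a / (n + 1) with hcdef
          have hn1 : (0:ℝ) < (n : ℝ) + 1 := by positivity
          have hc0 : 0 ≤ c := by
            have : a / ((n : ℝ) + 1) ≤ a := by
              rw [div_le_iff₀ hn1]
              nlinarith [h0a.le]
            simpa [hcdef] using sub_nonneg.mpr this
          have hca : c < a := by
            have : 0 < a / ((n : ℝ) + 1) := div_pos h0a hn1
            simpa [hcdef] using sub_lt_self a this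
          have := hlt c hc0 hca
          rw [intervalIntegrable_iff_integrableOn_Ioc_of_le hc0] at this
          exact this.aestronglyMeasurable
        exact hU.mono_set hcover
    have hIoo : IntegrableOn F (Set.Ioo 0 a) := by
      refine Integrable.mono' (g := fun _ => N) ?_ hsm (ae_of_all _ fun s => hFb s)
      exact (integrableOn_const_iff).mpr (Or.inr measure_Ioo_lt_top)
    have hIcc : IntegrableOn F (Set.Icc a T) := by
      have hae : (fun _ : ℝ => f z u_x) =ᵐ[volume.restrict (Set.Icc a T)] F := by
        have h1 : ∀ᵐ s ∂(volume.restrict (Set.Icc a T)), s ∈ Set.Icc a T :=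
          ae_restrict_mem measurableSet_Icc
        have h2 : ∀ᵐ s : ℝ ∂(volume.restrict (Set.Icc a T)), s ≠ a := by
          refine ae_restrict_of_ae ?_
          rw [ae_iff]
          have : {s : ℝ | ¬ s ≠ a} = {a} := by ext s; simp
          rw [this]
          exact measure_singleton a
        filter_upwards [h1, h2] with s hs hsne
        exact (hFconst s (lt_of_le_of_ne hs.1 (Ne.symm hsne))).symm
      exact ((integrableOn_const_iff).mpr (Or.inr measure_Icc_lt_top)).congr hae
    have hTint : IntegrableOn F (Set.Ioc 0 T) := by
      refine (hIoo.union hIcc).mono_set ?_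
      intro s hs
      rcases lt_or_ge s a with hsa | has
      · exact Set.mem_union_left _ ⟨hs.1, hsa⟩
      · exact Set.mem_union_right _ ⟨has, hs.2⟩
    exact hTni ((intervalIntegrable_iff_integrableOn_Ioc_of_le hT0).mpr hTint)
  -- Step 2: z₁ is N-Lipschitz on [0, ∞)
  have hLip : ∀ s t : ℝ, 0 ≤ s → s ≤ t → ‖z₁ t - z₁ s‖ ≤ N * (t - s) := by
    intro s t hs hst
    have ht0 : 0 ≤ t := hs.trans hst
    have hst' : IntervalIntegrable F volume s t := (keyA s hs).symm.trans (keyA t ht0)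
    have hsplit : (∫ τ in (0:ℝ)..s, F τ) + ∫ τ in s..t, F τ = ∫ τ in (0:ℝ)..t, F τ :=
      intervalIntegral.integral_add_adjacent_intervals (keyA s hs) hst'
    have hdiff : z₁ t - z₁ s = ∫ τ in s..t, F τ := by
      rw [hz₁ t ht0, hz₁ s hs, ← hsplit]
      abel
    rw [hdiff]
    have hb := intervalIntegral.norm_integral_le_of_norm_le_const (C := N) (a := s) (b := t)
      (f := F) (fun τ _ => hFb τ)
    rwa [abs_of_nonneg (sub_nonneg.mpr hst)] at hb
  -- Step 3: linear growth of h
  have hstep : ∀ s t : ℝ, 0 ≤ s → s ≤ t → h s + (r₀ - G * N) * (t - s) ≤ h t := by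
    intro s t hs hst
    have ht0 : 0 ≤ t := hs.trans hst
    have hRst : IntervalIntegrable R volume s t := (hint s).symm.trans (hint t)
    have hsplit : (∫ τ in (0:ℝ)..s, R τ) + ∫ τ in s..t, R τ = ∫ τ in (0:ℝ)..t, R τ :=
      intervalIntegral.integral_add_adjacent_intervals (hint s) hRst
    have h1 : r₀ * (t - s) ≤ ∫ τ in s..t, R τ := by
      have hmono := intervalIntegral.integral_mono_on (f := fun _ : ℝ => r₀) (g := R)
        hst intervalIntegrable_const hRst (fun τ _ => hrb (z₁ τ) u_x hu_x)
      simpa [intervalIntegral.integral_const, smul_eq_mul, mul_comm] using hmono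
    have h2 : |g (z₁ t) - g (z₁ s)| ≤ G * (N * (t - s)) := by
      have hd := hg.dist_le_mul (z₁ t) (z₁ s)
      rw [Real.dist_eq, dist_eq_norm, Real.coe_toNNReal G hG] at hd
      exact hd.trans (mul_le_mul_of_nonneg_left (hLip s t hs hst) hG)
    have h2' := (abs_le.mp h2).1
    simp only [hh]
    rw [← hsplit]
    linarith
  have hmono : StrictMonoOn h (Set.Ici 0) := by
    intro s hs t ht hst
    have := hstep s t hs hst.le
    have hpos : 0 < (r₀ - G * N) * (t - s) := mul_pos hc (sub_pos.mpr hst)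
    linarith
  refine ⟨hmono, ?_⟩
  intro β hβ1 hβ2
  have h0 : h 0 = g z := by
    simp only [hh, intervalIntegral.integral_same, hz₁0, zero_add]
  set T : ℝ := (β - g z) / (r₀ - G * N) with hT
  have hT0 : 0 < T := div_pos (sub_pos.mpr hβ1) hc
  have hhT : β ≤ h T := by
    have := hstep 0 T le_rfl hT0.le
    rw [h0, sub_zero, hT, mul_div_cancel₀ _ (ne_of_gt hc)] at this
    rw [← hT] at this
    linarith
  -- continuity of h on [0, T]
  have hPcont : ContinuousOn (fun t => ∫ τ in (0:ℝ)..t, R τ) (Set.Icc 0 T) :=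
    (intervalIntegral.continuous_primitive (fun u v => (hint u).symm.trans (hint v)) 0).continuousOn
  have hz₁cont : ContinuousOn z₁ (Set.Icc 0 T) := by
    have hFc : ContinuousOn (fun t => z + ∫ τ in (0:ℝ)..t, F τ) (Set.uIcc 0 T) :=
      continuousOn_const.add
        (intervalIntegral.continuousOn_primitive_interval' (keyA T hT0.le) Set.left_mem_uIcc)
    rw [Set.uIcc_of_le hT0.le] at hFc
    exact hFc.congr fun t ht => hz₁ t ht.1
  have hhcont : ContinuousOn h (Set.Icc 0 T) :=
    hPcont.add (hg.continuous.comp_continuousOn hz₁cont)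
  have hmem : β ∈ Set.Icc (h 0) (h T) := ⟨by rw [h0]; exact hβ1.le, hhT⟩
  obtain ⟨tβ, htβmem, htβ⟩ := intermediate_value_Icc hT0.le hhcont hmem
  have htβpos : 0 < tβ := by
    rcases eq_or_lt_of_le htβmem.1 with heq | hlt
    · exfalso
      rw [← heq] at htβ
      rw [h0] at htβ
      linarith
    · exact hlt
  refine ⟨tβ, htβpos, htβ, ?_⟩
  have hge : g z + (r₀ - G * N) * tβ ≤ β := by
    have := hstep 0 tβ le_rfl htβpos.le
    rw [h0, sub_zero, htβ] at this
    exact this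
  have hb1 : tβ ≤ (β - g z) / (r₀ - G * N) := by
    rw [le_div_iff₀ hc]
    linarith
  have hb2 : β - g z ≤ |β - g x| + G * ‖z - x‖ := by
    have hgx : g x - g z ≤ G * ‖z - x‖ := by
      have hd := hg.dist_le_mul x z
      rw [Real.dist_eq, dist_eq_norm, Real.coe_toNNReal G hG, norm_sub_rev] at hd
      linarith [le_abs_self (g x - g z)]
    have : β - g x ≤ |β - g x| := le_abs_self _
    linarith
  refine hb1.trans ?_
  rw [div_eq_mul_inv, mul_comm, ← one_div]
  exact mul_le_mul_of_nonneg_left hb2 (by positivity)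
end

section
/- Let Ω ⊆ ℝ^d be open and f: Ω → ℝ continuous with hypo(f) satisfying a ρ(·)-exterior sphere condition, and suppose f is differentiable almost everywhere with differentiability points dense. If the proximal normal cone N^P_{hypo(f)}(x,f(x)) equals a single ray {s v_x : s ≥ 0} for a unit vector v_x, then the unit proximal normals v_y chosen at nearby points (y, f(y)) by the exterior sphere condition converge to v_x as y → x. -/
/-- Let `Ω ⊆ ℝ^d` be open and `f : Ω → ℝ` continuous with `hypo(f)`
satisfying a `ρ(·)`-exterior sphere condition, with differentiability points of `f` dense
in `Ω` (`f` differentiable a.e.).  If the proximal normal cone of `hypo(f)` at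
`(x, f x)` is a single ray `{s v_x : s ≥ 0}` for a unit vector `v_x = (w₀, c₀)`, then
any choice of unit proximal normals `v_y` realized by balls of radius `ρ(y)` at nearby
points converges to `v_x` as `y → x`. -/
theorem unit_normals_converge_of_ray_cone {d : ℕ}
    (Ω : Set (EuclideanSpace ℝ (Fin d))) (hΩ : IsOpen Ω)
    (f : EuclideanSpace ℝ (Fin d) → ℝ) (hf : ContinuousOn f Ω)
    (ρ : EuclideanSpace ℝ (Fin d) → ℝ) (hρc : ContinuousOn ρ Ω)
    (hρpos : ∀ y ∈ Ω, 0 < ρ y)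
    (hsphere : ∀ y ∈ Ω, ∃ w : EuclideanSpace ℝ (Fin d), ∃ c : ℝ,
      ‖w‖ ^ 2 + c ^ 2 = 1 ∧ ∀ z ∈ Ω, ∀ β : ℝ, β ≤ f z →
        (inner ℝ w (z - y) : ℝ) + c * (β - f y) ≤
          (1 / (2 * ρ y)) * (‖z - y‖ ^ 2 + (β - f y) ^ 2))
    -- differentiability points are dense in `Ω`
    (hdense : ∀ y ∈ Ω, ∀ ε > (0:ℝ), ∃ y' ∈ Ω,
      ‖y' - y‖ < ε ∧ DifferentiableAt ℝ f y')
    (x : EuclideanSpace ℝ (Fin d)) (hx : x ∈ Ω)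
    (w₀ : EuclideanSpace ℝ (Fin d)) (c₀ : ℝ) (hunit : ‖w₀‖ ^ 2 + c₀ ^ 2 = 1)
    -- the proximal normal cone at `(x, f x)` is the ray generated by `(w₀, c₀)`
    (hray : {p : EuclideanSpace ℝ (Fin d) × ℝ | ∃ σ : ℝ, 0 ≤ σ ∧
        ∀ z ∈ Ω, ∀ β : ℝ, β ≤ f z →
          (inner ℝ p.1 (z - x) : ℝ) + p.2 * (β - f x) ≤
            σ * (‖z - x‖ ^ 2 + (β - f x) ^ 2)} =
      {p : EuclideanSpace ℝ (Fin d) × ℝ | ∃ s : ℝ, 0 ≤ s ∧ p = (s • w₀, s * c₀)}) :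
    ∀ (y : ℕ → EuclideanSpace ℝ (Fin d)) (w : ℕ → EuclideanSpace ℝ (Fin d)) (c : ℕ → ℝ),
      (∀ n, y n ∈ Ω) →
      Filter.Tendsto y Filter.atTop (nhds x) →
      (∀ n, ‖w n‖ ^ 2 + (c n) ^ 2 = 1) →
      (∀ n, ∀ z ∈ Ω, ∀ β : ℝ, β ≤ f z →
        (inner ℝ (w n) (z - y n) : ℝ) + c n * (β - f (y n)) ≤
          (1 / (2 * ρ (y n))) * (‖z - y n‖ ^ 2 + (β - f (y n)) ^ 2)) →
      Filter.Tendsto (fun n => (w n, c n)) Filter.atTop (nhds (w₀, c₀)) := by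
  intro y w c hyΩ hyx hwc hineq
  have hfx : ContinuousAt f x := hf.continuousAt (hΩ.mem_nhds hx)
  have hρx : ContinuousAt ρ x := hρc.continuousAt (hΩ.mem_nhds hx)
  have hρxpos : 0 < ρ x := hρpos x hx
  apply Filter.tendsto_of_subseq_tendsto
  intro ns hns
  have hball : ∀ n,
      (w (ns n), c (ns n)) ∈ Metric.closedBall (0 : EuclideanSpace ℝ (Fin d) × ℝ) 1 := by
    intro n
    rw [Metric.mem_closedBall, dist_zero_right, Prod.norm_def]
    have h := hwc (ns n)
    have h1 : ‖w (ns n)‖ ≤ 1 := by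
      nlinarith [sq_nonneg (c (ns n)), norm_nonneg (w (ns n)),
        sq_nonneg (‖w (ns n)‖ - 1)]
    have h2 : |c (ns n)| ≤ 1 := by
      nlinarith [sq_nonneg (‖w (ns n)‖), abs_nonneg (c (ns n)), sq_abs (c (ns n)),
        sq_nonneg (|c (ns n)| - 1)]
    simpa [Real.norm_eq_abs] using max_le h1 h2
  obtain ⟨p, _, φ, hφ, hlim⟩ :=
    (ProperSpace.isCompact_closedBall (0 : EuclideanSpace ℝ (Fin d) × ℝ) 1).tendsto_subseq hball
  set k : ℕ → ℕ := ns ∘ φ with hk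
  have hktop : Filter.Tendsto k Filter.atTop Filter.atTop := hns.comp hφ.tendsto_atTop
  have hyk : Filter.Tendsto (fun n => y (k n)) Filter.atTop (nhds x) := hyx.comp hktop
  have hfk : Filter.Tendsto (fun n => f (y (k n))) Filter.atTop (nhds (f x)) :=
    hfx.tendsto.comp hyk
  have hρk : Filter.Tendsto (fun n => ρ (y (k n))) Filter.atTop (nhds (ρ x)) :=
    hρx.tendsto.comp hyk
  have hwk : Filter.Tendsto (fun n => w (k n)) Filter.atTop (nhds p.1) :=
    (continuous_fst.tendsto p).comp hlim
  have hck : Filter.Tendsto (fun n => c (k n)) Filter.atTop (nhds p.2) :=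
    (continuous_snd.tendsto p).comp hlim
  -- p is a proximal normal at (x, f x)
  have hmem : p ∈ {p : EuclideanSpace ℝ (Fin d) × ℝ | ∃ σ : ℝ, 0 ≤ σ ∧
      ∀ z ∈ Ω, ∀ β : ℝ, β ≤ f z →
        (inner ℝ p.1 (z - x) : ℝ) + p.2 * (β - f x) ≤
          σ * (‖z - x‖ ^ 2 + (β - f x) ^ 2)} := by
    refine ⟨1 / (2 * ρ x), by positivity, ?_⟩
    intro z hz β hβ
    have hA : Filter.Tendsto
        (fun n => (inner ℝ (w (k n)) (z - y (k n)) : ℝ) + c (k n) * (β - f (y (k n))))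
        Filter.atTop (nhds ((inner ℝ p.1 (z - x) : ℝ) + p.2 * (β - f x))) :=
      (hwk.inner (tendsto_const_nhds.sub hyk)).add
        (hck.mul (tendsto_const_nhds.sub hfk))
    have hB : Filter.Tendsto
        (fun n => (1 / (2 * ρ (y (k n)))) * (‖z - y (k n)‖ ^ 2 + (β - f (y (k n))) ^ 2))
        Filter.atTop (nhds ((1 / (2 * ρ x)) * (‖z - x‖ ^ 2 + (β - f x) ^ 2))) := by
      have h2ρ : Filter.Tendsto (fun n => 2 * ρ (y (k n))) Filter.atTop (nhds (2 * ρ x)) :=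
        tendsto_const_nhds.mul hρk
      have hne : (2 * ρ x) ≠ 0 := by positivity
      have hnorm : Filter.Tendsto (fun n => ‖z - y (k n)‖) Filter.atTop (nhds ‖z - x‖) :=
        (tendsto_const_nhds.sub hyk).norm
      exact (tendsto_const_nhds.div h2ρ hne).mul
        ((hnorm.pow 2).add ((tendsto_const_nhds.sub hfk).pow 2))
    exact le_of_tendsto_of_tendsto' hA hB (fun n => hineq (k n) z hz β hβ)
  rw [hray] at hmem
  obtain ⟨s, hs, hps⟩ := hmem
  -- norm of p equals 1
  have hnorm1 : ‖p.1‖ ^ 2 + p.2 ^ 2 = 1 := by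
    have ht : Filter.Tendsto (fun n => ‖w (k n)‖ ^ 2 + c (k n) ^ 2)
        Filter.atTop (nhds (‖p.1‖ ^ 2 + p.2 ^ 2)) :=
      ((hwk.norm.pow 2).add (hck.pow 2))
    have ht' : Filter.Tendsto (fun n => ‖w (k n)‖ ^ 2 + c (k n) ^ 2)
        Filter.atTop (nhds 1) := by
      simpa [hwc] using (tendsto_const_nhds : Filter.Tendsto (fun _ : ℕ => (1:ℝ)) _ _)
    exact tendsto_nhds_unique ht ht'
  have hs1 : s = 1 := by
    have h1 : p.1 = s • w₀ := by rw [hps]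
    have h2 : p.2 = s * c₀ := by rw [hps]
    rw [h1, h2, norm_smul, Real.norm_eq_abs, mul_pow, mul_pow, sq_abs] at hnorm1
    nlinarith
  have hp : p = (w₀, c₀) := by rw [hps, hs1, one_smul, one_mul]
  exact ⟨φ, by simpa [hp, Function.comp_def] using hlim⟩
end
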